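/- arXiv:0812.2939 — 3 statements merged into one kernel-verified Lean document; each statement's English description precedes it below -/
import Mathlib

section
/- Let X be a real vector space, Y a real Banach space, and let f : X → Y be an even function with ‖D_f(x,y)‖ ≤ φ(x,y) for all x, y ∈ X, where φ : X × X → [0,∞) satisfies: ∑_{i=1}^∞ 16^i·(φ(x/2^i, x/2^{i+1}) + φ(x/2^i, x/2^i)) converges for all x ∈ X, and lim_{n→∞} 16^n·φ(x/2^n, y/2^n) = 0 for all x, y ∈ X. Then there exist a unique quadratic function Q₁ : X → Y and a unique quartic function Q₂ : X → Y such that ‖f(x) − Q₁(x) − Q₂(x)‖ ≤ (1/12)·∑_{i=0}^∞ (4^i + 16^i)·((1/3)·φ(x/2^i, x/2^{i+1}) + (16/3)·φ(x/2^{i+1}, x/2^{i+1})) for all x ∈ X. -/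
open Filter Topology

/-- The mixed quadratic-cubic-quartic functional equation (1.5). -/
def MixedEq {X Y : Type*} [AddCommGroup X] [AddCommGroup Y] (f : X → Y) : Prop :=
  ∀ x y : X, 3 • (f (x + 2 • y) + f (x - 2 • y)) =
    12 • (f (x + y) + f (x - y)) + 4 • f (3 • y) - 18 • f (2 • y) + 36 • f y - 18 • f x

/-- The difference operator D_f. -/
def Dop {X Y : Type*} [AddCommGroup X] [AddCommGroup Y] (f : X → Y) (x y : X) : Y :=
  3 • (f (x + 2 • y) + f (x - 2 • y)) - 12 • (f (x + y) + f (x - y))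
    - 4 • f (3 • y) + 18 • f (2 • y) - 36 • f y + 18 • f x

/-- Quadratic functional equation. -/
def IsQuadratic {X Y : Type*} [AddCommGroup X] [AddCommGroup Y] (g : X → Y) : Prop :=
  ∀ x y : X, g (x + y) + g (x - y) = 2 • g x + 2 • g y

/-- Cubic functional equation. -/
def IsCubic {X Y : Type*} [AddCommGroup X] [AddCommGroup Y] (c : X → Y) : Prop :=
  ∀ x y : X, c (2 • x + y) + c (2 • x - y) = 2 • c (x + y) + 2 • c (x - y) + 12 • c x

/-- Quartic functional equation. -/
def IsQuartic {X Y : Type*} [AddCommGroup X] [AddCommGroup Y] (q : X → Y) : Prop :=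
  ∀ x y : X, q (2 • x + y) + q (2 • x - y) = 4 • (q (x + y) + q (x - y)) + 24 • q x - 6 • q y

section Aux

variable {X Y : Type*} [AddCommGroup X] [Module ℝ X] [AddCommGroup Y] [Module ℝ Y]

/-- halving map -/
noncomputable def hv (n : ℕ) (x : X) : X := ((2:ℝ)^n)⁻¹ • x

lemma hv_zero (x : X) : hv 0 x = x := by simp [hv]

lemma hv_two (n : ℕ) (x : X) : (2:ℕ) • hv (n+1) x = hv n x := by
  rw [hv, hv, ← Nat.cast_smul_eq_nsmul ℝ, smul_smul]
  congr 1
  rw [pow_succ]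
  push_cast
  field_simp

lemma hv_hv (i n : ℕ) (x : X) : hv i (hv n x) = hv (i+n) x := by
  rw [hv, hv, hv, smul_smul, pow_add, mul_inv]

lemma hv_add (n : ℕ) (x y : X) : hv n (x + y) = hv n x + hv n y := smul_add _ _ _

lemma hv_sub (n : ℕ) (x y : X) : hv n (x - y) = hv n x - hv n y := smul_sub _ _ _

lemma hv_neg (n : ℕ) (x : X) : hv n (-x) = -(hv n x) := smul_neg _ _

lemma hv_nsmul (n m : ℕ) (x : X) : hv n (m • x) = m • hv n x := smul_comm _ _ _

lemma hv_zero_pt (n : ℕ) : hv n (0:X) = 0 := smul_zero _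

end Aux

section Cert

variable {X Y : Type*} [AddCommGroup X] [Module ℝ X] [AddCommGroup Y] [Module ℝ Y]

set_option maxHeartbeats 2000000 in
theorem quad_of_mixed (F : X → Y) (heven : ∀ z : X, F (-z) = F z) (h0 : F 0 = 0)
    (hhom : ∀ z : X, F (2 • z) = 4 • F z) (hmix : MixedEq F) : IsQuadratic F := by
  intro x y
  have h1 := hmix (2 • y) (y)
  rw [show ((2 • y) + 2 • y : X) = 4 • y by abel] at h1
  rw [show ((2 • y) - 2 • y : X) = (0:X) by abel] at h1
  rw [show ((2 • y) + y : X) = 3 • y by abel] at h1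
  rw [show ((2 • y) - y : X) = y by abel] at h1
  simp only [heven, h0] at h1
  have h2 := hmix (-(2 • y)) (x)
  rw [show ((-(2 • y)) + 2 • x : X) = 2 • x - 2 • y by abel] at h2
  rw [show ((-(2 • y)) - 2 • x : X) = -(2 • x + 2 • y) by abel] at h2
  rw [show ((-(2 • y)) + x : X) = x - 2 • y by abel] at h2
  rw [show ((-(2 • y)) - x : X) = -(x + 2 • y) by abel] at h2
  simp only [heven, h0] at h2
  have h3 := hmix (y) (y)
  rw [show (y + 2 • y : X) = 3 • y by abel] at h3
  rw [show (y - 2 • y : X) = -(y) by abel] at h3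
  rw [show (y + y : X) = 2 • y by abel] at h3
  rw [show (y - y : X) = (0:X) by abel] at h3
  simp only [heven, h0] at h3
  have h4 := hmix ((0:X)) (x)
  rw [show ((0:X) + 2 • x : X) = 2 • x by abel] at h4
  rw [show ((0:X) - 2 • x : X) = -(2 • x) by abel] at h4
  rw [show ((0:X) + x : X) = x by abel] at h4
  rw [show ((0:X) - x : X) = -(x) by abel] at h4
  simp only [heven, h0] at h4
  have h5 := hmix (x) (-(y))
  rw [show (x + 2 • (-(y)) : X) = x - 2 • y by abel] at h5
  rw [show (x - 2 • (-(y)) : X) = x + 2 • y by abel] at h5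
  rw [show (x + (-(y)) : X) = x - y by abel] at h5
  rw [show (x - (-(y)) : X) = x + y by abel] at h5
  rw [show (3 • (-(y)) : X) = -(3 • y) by abel] at h5
  rw [show (2 • (-(y)) : X) = -(2 • y) by abel] at h5
  simp only [heven, h0] at h5
  have hH1 := hhom (2 • y)
  simp only [show (2 • (2 • y) : X) = 4 • y by abel] at hH1
  have hH2 := hhom (x - y)
  simp only [show (2 • (x - y) : X) = 2 • x - 2 • y by abel] at hH2
  have hH3 := hhom (x)
  have hH4 := hhom (x + y)
  simp only [show (2 • (x + y) : X) = 2 • x + 2 • y by abel] at hH4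
  have key : (288:ℤ) • ((F (x + y) + F (x - y)) - (2 • F x + 2 • F y)) = (1:ℤ) • ((3 • (F (4 • y) + (0:Y))) - (12 • (F (3 • y) + F (y)) + 4 • F (3 • y) - 18 • F (2 • y) + 36 • F (y) - 18 • F (2 • y))) + (-8:ℤ) • ((3 • (F (2 • x - 2 • y) + F (2 • x + 2 • y))) - (12 • (F (x - 2 • y) + F (x + 2 • y)) + 4 • F (3 • x) - 18 • F (2 • x) + 36 • F (x) - 18 • F (2 • y))) + (112:ℤ) • ((3 • (F (3 • y) + F (y))) - (12 • (F (2 • y) + (0:Y)) + 4 • F (3 • y) - 18 • F (2 • y) + 36 • F (y) - 18 • F (y))) + (8:ℤ) • ((3 • (F (2 • x) + F (2 • x))) - (12 • (F (x) + F (x)) + 4 • F (3 • x) - 18 • F (2 • x) + 36 • F (x) - 18 • (0:Y))) + (-32:ℤ) • ((3 • (F (x - 2 • y) + F (x + 2 • y))) - (12 • (F (x - y) + F (x + y)) + 4 • F (3 • y) - 18 • F (2 • y) + 36 • F (y) - 18 • F (x))) + (-3:ℤ) • ((F (4 • y)) - (4 • F (2 • y))) + (24:ℤ) • ((F (2 •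 x - 2 • y)) - (4 • F (x - y))) + (-48:ℤ) • ((F (2 • x)) - (4 • F (x))) + (24:ℤ) • ((F (2 • x + 2 • y)) - (4 • F (x + y))) := by abel
  rw [sub_eq_zero_of_eq h1, sub_eq_zero_of_eq h2, sub_eq_zero_of_eq h3, sub_eq_zero_of_eq h4, sub_eq_zero_of_eq h5, sub_eq_zero_of_eq hH1, sub_eq_zero_of_eq hH2, sub_eq_zero_of_eq hH3, sub_eq_zero_of_eq hH4] at key
  simp only [smul_zero, add_zero, zero_add] at key
  have key2 : ((288:ℤ):ℝ) • ((F (x + y) + F (x - y)) - (2 • F x + 2 • F y)) = 0 := by rw [Int.cast_smul_eq_zsmul]; exact key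
  have key3 := congrArg (fun z => (((288:ℤ):ℝ))⁻¹ • z) key2
  simp only [smul_zero] at key3
  rw [inv_smul_smul₀ (by norm_num : (((288:ℤ):ℝ)) ≠ 0)] at key3
  exact sub_eq_zero.mp key3

set_option maxHeartbeats 2000000 in
theorem quart_of_mixed (F : X → Y) (heven : ∀ z : X, F (-z) = F z) (h0 : F 0 = 0)
    (hhom : ∀ z : X, F (2 • z) = 16 • F z) (hmix : MixedEq F) : IsQuartic F := by
  intro x y
  have h1 := hmix (2 • y) (y)
  rw [show ((2 • y) + 2 • y : X) = 4 • y by abel] at h1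
  rw [show ((2 • y) - 2 • y : X) = (0:X) by abel] at h1
  rw [show ((2 • y) + y : X) = 3 • y by abel] at h1
  rw [show ((2 • y) - y : X) = y by abel] at h1
  simp only [heven, h0] at h1
  have h2 := hmix (-(2 • y)) (x - y)
  rw [show ((-(2 • y)) + 2 • (x - y) : X) = 2 • x - 4 • y by abel] at h2
  rw [show ((-(2 • y)) - 2 • (x - y) : X) = -(2 • x) by abel] at h2
  rw [show ((-(2 • y)) + (x - y) : X) = x - 3 • y by abel] at h2
  rw [show ((-(2 • y)) - (x - y) : X) = -(x + y) by abel] at h2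
  rw [show (3 • (x - y) : X) = 3 • x - 3 • y by abel] at h2
  rw [show (2 • (x - y) : X) = 2 • x - 2 • y by abel] at h2
  simp only [heven, h0] at h2
  have h3 := hmix (y) (y)
  rw [show (y + 2 • y : X) = 3 • y by abel] at h3
  rw [show (y - 2 • y : X) = -(y) by abel] at h3
  rw [show (y + y : X) = 2 • y by abel] at h3
  rw [show (y - y : X) = (0:X) by abel] at h3
  simp only [heven, h0] at h3
  have h4 := hmix (-(y)) (x)
  rw [show ((-(y)) + 2 • x : X) = 2 • x - y by abel] at h4
  rw [show ((-(y)) - 2 • x : X) = -(2 • x + y) by abel] at h4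
  rw [show ((-(y)) + x : X) = x - y by abel] at h4
  rw [show ((-(y)) - x : X) = -(x + y) by abel] at h4
  simp only [heven, h0] at h4
  have h5 := hmix ((0:X)) (x - y)
  rw [show ((0:X) + 2 • (x - y) : X) = 2 • x - 2 • y by abel] at h5
  rw [show ((0:X) - 2 • (x - y) : X) = -(2 • x - 2 • y) by abel] at h5
  rw [show ((0:X) + (x - y) : X) = x - y by abel] at h5
  rw [show ((0:X) - (x - y) : X) = -(x - y) by abel] at h5
  rw [show (3 • (x - y) : X) = 3 • x - 3 • y by abel] at h5
  rw [show (2 • (x - y) : X) = 2 • x - 2 • y by abel] at h5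
  simp only [heven, h0] at h5
  have h6 := hmix ((0:X)) (x)
  rw [show ((0:X) + 2 • x : X) = 2 • x by abel] at h6
  rw [show ((0:X) - 2 • x : X) = -(2 • x) by abel] at h6
  rw [show ((0:X) + x : X) = x by abel] at h6
  rw [show ((0:X) - x : X) = -(x) by abel] at h6
  simp only [heven, h0] at h6
  have h7 := hmix (x - y) (-(y))
  rw [show ((x - y) + 2 • (-(y)) : X) = x - 3 • y by abel] at h7
  rw [show ((x - y) - 2 • (-(y)) : X) = x + y by abel] at h7
  rw [show ((x - y) + (-(y)) : X) = x - 2 • y by abel] at h7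
  rw [show ((x - y) - (-(y)) : X) = x by abel] at h7
  rw [show (3 • (-(y)) : X) = -(3 • y) by abel] at h7
  rw [show (2 • (-(y)) : X) = -(2 • y) by abel] at h7
  simp only [heven, h0] at h7
  have hH1 := hhom (2 • y)
  simp only [show (2 • (2 • y) : X) = 4 • y by abel] at hH1
  have hH2 := hhom (x - 2 • y)
  simp only [show (2 • (x - 2 • y) : X) = 2 • x - 4 • y by abel] at hH2
  have hH3 := hhom (x - y)
  simp only [show (2 • (x - y) : X) = 2 • x - 2 • y by abel] at hH3
  have key : (3:ℤ) • ((F (2 • x + y) + F (2 • x - y)) - (4 • (F (x + y) + F (x - y)) + 24 • F x - 6 • F y)) = (-1:ℤ) • ((3 • (F (4 • y) + (0:Y))) - (12 • (F (3 • y) + F (y)) + 4 • F (3 • y) - 18 • F (2 • y) + 36 • F (y) - 18 • F (2 • y))) + (2:ℤ) • ((3 • (F (2 • x - 4 • y) + F (2 • x))) - (12 • (F (x - 3 • y) + F (x + y)) + 4 • F (3 • x - 3 • y) - 18 • F (2 • x - 2 • y) + 36 • F (x - y) - 18 • F (2 • y))) + (-16:ℤ) • ((3 • (F (3 • y) + F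 (y))) - (12 • (F (2 • y) + (0:Y)) + 4 • F (3 • y) - 18 • F (2 • y) + 36 • F (y) - 18 • F (y))) + (1:ℤ) • ((3 • (F (2 • x - y) + F (2 • x + y))) - (12 • (F (x - y) + F (x + y)) + 4 • F (3 • x) - 18 • F (2 • x) + 36 • F (x) - 18 • F (y))) + (-2:ℤ) • ((3 • (F (2 • x - 2 • y) + F (2 • x - 2 • y))) - (12 • (F (x - y) + F (x - y)) + 4 • F (3 • x - 3 • y) - 18 • F (2 • x - 2 • y) + 36 • F (x - y) - 18 • (0:Y))) + (-1:ℤ) • ((3 • (F (2 • x) + F (2 • x))) - (12 • (F (x) + F (x)) + 4 • F (3 • x) - 18 • F (2 • x) + 36 • F (x) - 18 • (0:Y))) + (8:ℤ) • ((3 • (F (x - 3 • y) + F (x + y))) - (12 • (F (x - 2 • y) + F (x)) + 4 • F (3 • y) - 18 • F (2 • y) + 36 • F (y) - 18 • F (x - y))) + (3:ℤ) • ((F (4 • y)) - (16 • F (2 • y))) + (-6:ℤ) • ((F (2 • x - 4 • y)) - (16 • F (x - 2 • y))) + (12:ℤ) • ((F (2 • x - 2 • y)) - (16 • F (x - y)))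 := by abel
  rw [sub_eq_zero_of_eq h1, sub_eq_zero_of_eq h2, sub_eq_zero_of_eq h3, sub_eq_zero_of_eq h4, sub_eq_zero_of_eq h5, sub_eq_zero_of_eq h6, sub_eq_zero_of_eq h7, sub_eq_zero_of_eq hH1, sub_eq_zero_of_eq hH2, sub_eq_zero_of_eq hH3] at key
  simp only [smul_zero, add_zero, zero_add] at key
  have key2 : ((3:ℤ):ℝ) • ((F (2 • x + y) + F (2 • x - y)) - (4 • (F (x + y) + F (x - y)) + 24 • F x - 6 • F y)) = 0 := by rw [Int.cast_smul_eq_zsmul]; exact key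
  have key3 := congrArg (fun z => (((3:ℤ):ℝ))⁻¹ • z) key2
  simp only [smul_zero] at key3
  rw [inv_smul_smul₀ (by norm_num : (((3:ℤ):ℝ)) ≠ 0)] at key3
  exact sub_eq_zero.mp key3

end Cert


section Analysis

variable {X Y : Type*} [AddCommGroup X] [Module ℝ X]
  [NormedAddCommGroup Y] [NormedSpace ℝ Y]

lemma Dop_scale (f : X → Y) (k : ℝ) (U V : X) :
    Dop (fun z => f (2 • z) - k • f z) U V = Dop f (2 • U) (2 • V) - k • Dop f U V := by
  simp only [Dop]
  rw [show (2:ℕ) • (U + 2 • V) = 2 • U + 4 • V by abel,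
      show (2:ℕ) • U + 2 • (2 • V) = 2 • U + 4 • V by abel,
      show (2:ℕ) • (U - 2 • V) = 2 • U - 4 • V by abel,
      show (2:ℕ) • U - 2 • (2 • V) = 2 • U - 4 • V by abel,
      show (2:ℕ) • (U + V) = 2 • U + 2 • V by abel,
      show (2:ℕ) • (U - V) = 2 • U - 2 • V by abel,
      show (2:ℕ) • ((3:ℕ) • V) = 6 • V by abel,
      show (3:ℕ) • ((2:ℕ) • V) = 6 • V by abel,
      show (2:ℕ) • ((2:ℕ) • V) = 4 • V by abel]
  module

lemma mixedEq_of_tendsto (f : X → Y) (φ : X → X → ℝ) (hφ0 : ∀ x y : X, 0 ≤ φ x y)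
    (hbd : ∀ x y : X, ‖Dop f x y‖ ≤ φ x y)
    (hlim : ∀ x y : X, Tendsto (fun n : ℕ => (16:ℝ)^n * φ (hv n x) (hv n y)) atTop (𝓝 0))
    (r : ℝ) (hr0 : 0 ≤ r) (hr16 : r ≤ 16) (k : ℝ) (hk : 0 ≤ k) (Q : X → Y)
    (hQ : ∀ z : X, Tendsto (fun n : ℕ => r^n • (f (2 • hv n z) - k • f (hv n z)))
      atTop (𝓝 (Q z))) : MixedEq Q := by
  set g : X → Y := fun z => f (2 • z) - k • f z with hgdef
  intro x y
  have key : ∀ n : ℕ, r^n • Dop g (hv n x) (hv n y)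
      = 3 • (r^n • g (hv n (x + 2 • y)) + r^n • g (hv n (x - 2 • y)))
        - 12 • (r^n • g (hv n (x + y)) + r^n • g (hv n (x - y)))
        - 4 • (r^n • g (hv n (3 • y))) + 18 • (r^n • g (hv n (2 • y)))
        - 36 • (r^n • g (hv n y)) + 18 • (r^n • g (hv n x)) := by
    intro n
    simp only [Dop, hv_add, hv_sub, hv_nsmul]
    module
  have hT : Tendsto (fun n : ℕ => r^n • Dop g (hv n x) (hv n y)) atTop
      (𝓝 (3 • (Q (x + 2 • y) + Q (x - 2 • y))
        - 12 • (Q (x + y) + Q (x - y))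
        - 4 • Q (3 • y) + 18 • Q (2 • y) - 36 • Q y + 18 • Q x)) := by
    have T := (((((((hQ (x + 2 • y)).add (hQ (x - 2 • y))).const_smul (3:ℕ)).sub
      (((hQ (x + y)).add (hQ (x - y))).const_smul (12:ℕ))).sub
      ((hQ (3 • y)).const_smul (4:ℕ))).add ((hQ (2 • y)).const_smul (18:ℕ))).sub
      ((hQ y).const_smul (36:ℕ))).add ((hQ x).const_smul (18:ℕ))
    exact T.congr (fun n => (key n).symm)
  have hb : ∀ n : ℕ, ‖r^n • Dop g (hv n x) (hv n y)‖
      ≤ (16:ℝ)^n * φ (hv n (2 • x)) (hv n (2 • y)) + k * ((16:ℝ)^n * φ (hv n x) (hv n y)) := by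
    intro n
    rw [norm_smul, Real.norm_eq_abs, abs_of_nonneg (pow_nonneg hr0 n)]
    have h1 : ‖Dop g (hv n x) (hv n y)‖ ≤ φ (hv n (2 • x)) (hv n (2 • y)) + k * φ (hv n x) (hv n y) := by
      rw [hgdef, Dop_scale f k, ← hv_nsmul, ← hv_nsmul]
      calc ‖Dop f (hv n (2 • x)) (hv n (2 • y)) - k • Dop f (hv n x) (hv n y)‖
          ≤ ‖Dop f (hv n (2 • x)) (hv n (2 • y))‖ + ‖k • Dop f (hv n x) (hv n y)‖ :=
            norm_sub_le _ _
        _ ≤ φ (hv n (2 • x)) (hv n (2 • y)) + k * φ (hv n x) (hv n y) := by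
            rw [norm_smul, Real.norm_eq_abs, abs_of_nonneg hk]
            exact add_le_add (hbd _ _) (mul_le_mul_of_nonneg_left (hbd _ _) hk)
    have h2 : (r:ℝ)^n ≤ (16:ℝ)^n := pow_le_pow_left₀ hr0 hr16 n
    have h3 : (0:ℝ) ≤ ‖Dop g (hv n x) (hv n y)‖ := norm_nonneg _
    have h4 := hφ0 (hv n (2 • x)) (hv n (2 • y))
    have h5 := hφ0 (hv n x) (hv n y)
    nlinarith [pow_nonneg hr0 n]
  have h0' : Tendsto (fun n : ℕ => r^n • Dop g (hv n x) (hv n y)) atTop (𝓝 0) := by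
    apply squeeze_zero_norm hb
    have := (hlim (2 • x) (2 • y)).add ((hlim x y).const_mul k)
    simpa using this
  have hDQ0 := tendsto_nhds_unique hT h0'
  have key2 : (3 • (Q (x + 2 • y) + Q (x - 2 • y)))
      - (12 • (Q (x + y) + Q (x - y)) + 4 • Q (3 • y) - 18 • Q (2 • y) + 36 • Q y - 18 • Q x)
      = 3 • (Q (x + 2 • y) + Q (x - 2 • y))
        - 12 • (Q (x + y) + Q (x - y))
        - 4 • Q (3 • y) + 18 • Q (2 • y) - 36 • Q y + 18 • Q x := by abel
  rw [hDQ0] at key2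
  exact sub_eq_zero.mp key2

lemma isQuadratic_smul {F : X → Y} (hF : IsQuadratic F) (c : ℝ) :
    IsQuadratic (fun x => c • F x) := by
  intro x y
  dsimp only
  calc c • F (x + y) + c • F (x - y) = c • (F (x + y) + F (x - y)) := (smul_add _ _ _).symm
    _ = c • (2 • F x + 2 • F y) := by rw [hF x y]
    _ = 2 • (c • F x) + 2 • (c • F y) := by module

lemma isQuartic_smul {F : X → Y} (hF : IsQuartic F) (c : ℝ) :
    IsQuartic (fun x => c • F x) := by
  intro x y
  dsimp only
  calc c • F (2 • x + y) + c • F (2 • x - y) = c • (F (2 • x + y) + F (2 • x - y)) :=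
        (smul_add _ _ _).symm
    _ = c • (4 • (F (x + y) + F (x - y)) + 24 • F x - 6 • F y) := by rw [hF x y]
    _ = 4 • (c • F (x + y) + c • F (x - y)) + 24 • (c • F x) - 6 • (c • F y) := by module

lemma isQuadratic_sub {A B : X → Y} (hA : IsQuadratic A) (hB : IsQuadratic B) :
    IsQuadratic (fun z => A z - B z) := by
  intro x y
  dsimp only
  have e1 := hA x y
  have e2 := hB x y
  have key : (A (x + y) - B (x + y) + (A (x - y) - B (x - y)))
      - (2 • (A x - B x) + 2 • (A y - B y))
      = ((A (x + y) + A (x - y)) - (2 • A x + 2 • A y))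
        - ((B (x + y) + B (x - y)) - (2 • B x + 2 • B y)) := by abel
  rw [sub_eq_zero_of_eq e1, sub_eq_zero_of_eq e2, sub_zero] at key
  exact sub_eq_zero.mp key

lemma isQuartic_sub {A B : X → Y} (hA : IsQuartic A) (hB : IsQuartic B) :
    IsQuartic (fun z => A z - B z) := by
  intro x y
  dsimp only
  have e1 := hA x y
  have e2 := hB x y
  have key : (A (2 • x + y) - B (2 • x + y) + (A (2 • x - y) - B (2 • x - y)))
      - (4 • (A (x + y) - B (x + y) + (A (x - y) - B (x - y))) + 24 • (A x - B x)
        - 6 • (A y - B y))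
      = ((A (2 • x + y) + A (2 • x - y)) - (4 • (A (x + y) + A (x - y)) + 24 • A x - 6 • A y))
        - ((B (2 • x + y) + B (2 • x - y)) - (4 • (B (x + y) + B (x - y)) + 24 • B x - 6 • B y)) := by
    abel
  rw [sub_eq_zero_of_eq e1, sub_eq_zero_of_eq e2, sub_zero] at key
  exact sub_eq_zero.mp key

lemma isQuadratic_zero_pt {Q : X → Y} (hQ : IsQuadratic Q) : Q 0 = 0 := by
  have h := hQ 0 0
  rw [add_zero, sub_zero] at h
  have key : (2:ℝ) • Q 0 = (2 • Q 0 + 2 • Q 0) - (Q 0 + Q 0) := by module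
  rw [← h, sub_self] at key
  have := congrArg (fun z => ((2:ℝ))⁻¹ • z) key
  simpa [smul_smul] using this

lemma isQuadratic_double {Q : X → Y} (hQ : IsQuadratic Q) (x : X) :
    Q (2 • x) = (4:ℝ) • Q x := by
  have h := hQ x x
  rw [show (x + x : X) = 2 • x by abel, sub_self, isQuadratic_zero_pt hQ, add_zero] at h
  have key : (4:ℝ) • Q x = 2 • Q x + 2 • Q x := by module
  rw [h, ← key]

lemma isQuartic_zero_pt {Q : X → Y} (hQ : IsQuartic Q) : Q 0 = 0 := by
  have h := hQ 0 0
  simp only [smul_zero, add_zero, sub_zero] at h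
  -- h : Q 0 + Q 0 = 4 • (Q 0 + Q 0) + 24 • Q 0 - 6 • Q 0
  have key : (24:ℝ) • Q 0 = (4 • (Q 0 + Q 0) + 24 • Q 0 - 6 • Q 0) - (Q 0 + Q 0) := by module
  rw [← h, sub_self] at key
  have := congrArg (fun z => ((24:ℝ))⁻¹ • z) key
  simpa [smul_smul] using this

lemma isQuartic_double {Q : X → Y} (hQ : IsQuartic Q) (x : X) :
    Q (2 • x) = (16:ℝ) • Q x := by
  have h := hQ x 0
  simp only [add_zero, sub_zero, smul_zero, isQuartic_zero_pt hQ] at h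
  -- h : Q (2 • x) + Q (2 • x) = 4 • (Q x + Q x) + 24 • Q x - 6 • 0
  have key : (2:ℝ) • Q (2 • x) = Q (2 • x) + Q (2 • x) := by module
  have key2 : (2:ℝ) • ((16:ℝ) • Q x) = 4 • (Q x + Q x) + 24 • Q x := by module
  have : (2:ℝ) • Q (2 • x) = (2:ℝ) • ((16:ℝ) • Q x) := by rw [key, key2, h]
  have := congrArg (fun z => ((2:ℝ))⁻¹ • z) this
  simpa [smul_smul] using this

lemma isQuadratic_shrink {Q : X → Y} (hQ : IsQuadratic Q) (n : ℕ) (x : X) :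
    Q x = (4:ℝ)^n • Q (hv n x) := by
  induction n with
  | zero => simp [hv_zero]
  | succ n ih =>
    rw [ih, show hv n x = 2 • hv (n+1) x from (hv_two n x).symm,
      isQuadratic_double hQ, smul_smul, ← pow_succ]

lemma isQuartic_shrink {Q : X → Y} (hQ : IsQuartic Q) (n : ℕ) (x : X) :
    Q x = (16:ℝ)^n • Q (hv n x) := by
  induction n with
  | zero => simp [hv_zero]
  | succ n ih =>
    rw [ih, show hv n x = 2 • hv (n+1) x from (hv_two n x).symm,
      isQuartic_double hQ, smul_smul, ← pow_succ]

end Analysis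


section Aux2

variable {X : Type*} [AddCommGroup X] [Module ℝ X]

/-- the per-step error function -/
noncomputable def wfun (φ : X → X → ℝ) (n : ℕ) (x : X) : ℝ :=
  (1/3) * φ (hv n x) (hv (n+1) x) + (16/3) * φ (hv (n+1) x) (hv (n+1) x)

lemma wfun_nonneg (φ : X → X → ℝ) (hφ0 : ∀ x y : X, 0 ≤ φ x y) (n : ℕ) (x : X) :
    0 ≤ wfun φ n x := by
  unfold wfun
  have h1 := hφ0 (hv n x) (hv (n+1) x)
  have h2 := hφ0 (hv (n+1) x) (hv (n+1) x)
  nlinarith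

end Aux2

set_option maxHeartbeats 1000000 in
theorem stmt_10 {X Y : Type*} [AddCommGroup X] [Module ℝ X]
    [NormedAddCommGroup Y] [NormedSpace ℝ Y] [CompleteSpace Y]
    (f : X → Y) (heven : ∀ x : X, f (-x) = f x)
    (φ : X → X → ℝ) (hφ0 : ∀ x y : X, 0 ≤ φ x y)
    (hbd : ∀ x y : X, ‖Dop f x y‖ ≤ φ x y)
    (hsum : ∀ x : X, Summable fun i : ℕ =>
      (16 : ℝ) ^ (i + 1) *
        (φ (((2 : ℝ) ^ (i + 1))⁻¹ • x) (((2 : ℝ) ^ (i + 2))⁻¹ • x) +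
          φ (((2 : ℝ) ^ (i + 1))⁻¹ • x) (((2 : ℝ) ^ (i + 1))⁻¹ • x)))
    (hlim : ∀ x y : X, Tendsto
      (fun n : ℕ => (16 : ℝ) ^ n * φ (((2 : ℝ) ^ n)⁻¹ • x) (((2 : ℝ) ^ n)⁻¹ • y)) atTop (𝓝 0)) :
    ∃ (Q₁ Q₂ : X → Y),
      IsQuadratic Q₁ ∧ IsQuartic Q₂ ∧
      (∀ x : X, ‖f x - Q₁ x - Q₂ x‖ ≤
        (1 / 12) * ∑' i : ℕ, ((4 : ℝ) ^ i + (16 : ℝ) ^ i) *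
          ((1 / 3) * φ (((2 : ℝ) ^ i)⁻¹ • x) (((2 : ℝ) ^ (i + 1))⁻¹ • x) +
            (16 / 3) * φ (((2 : ℝ) ^ (i + 1))⁻¹ • x) (((2 : ℝ) ^ (i + 1))⁻¹ • x))) ∧
      (∀ Q₁' Q₂' : X → Y, IsQuadratic Q₁' → IsQuartic Q₂' →
        (∀ x : X, ‖f x - Q₁' x - Q₂' x‖ ≤
          (1 / 12) * ∑' i : ℕ, ((4 : ℝ) ^ i + (16 : ℝ) ^ i) *
            ((1 / 3) * φ (((2 : ℝ) ^ i)⁻¹ • x) (((2 : ℝ) ^ (i + 1))⁻¹ • x) +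
              (16 / 3) * φ (((2 : ℝ) ^ (i + 1))⁻¹ • x) (((2 : ℝ) ^ (i + 1))⁻¹ • x))) →
        Q₁' = Q₁ ∧ Q₂' = Q₂) := by
  classical
  have hlim' : ∀ x y : X, Tendsto
      (fun n : ℕ => (16:ℝ)^n * φ (hv n x) (hv n y)) atTop (𝓝 0) := fun x y => hlim x y
  have hsum' : ∀ x : X, Summable (fun i : ℕ => (16:ℝ)^(i+1) *
      (φ (hv (i+1) x) (hv (i+2) x) + φ (hv (i+1) x) (hv (i+1) x))) := fun x => hsum x
  have hφ00 : φ 0 0 = 0 := by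
    have h := hlim' 0 0
    have h' : Tendsto (fun n : ℕ => (16:ℝ)^n * φ 0 0) atTop (𝓝 0) := by
      refine Tendsto.congr (fun n => ?_) h
      rw [hv_zero_pt]
    have hle : φ 0 0 ≤ 0 := by
      refine ge_of_tendsto' h' (fun n => ?_)
      have h16 : (1:ℝ) ≤ 16^n := one_le_pow₀ (by norm_num)
      nlinarith [hφ0 (0:X) (0:X)]
    exact le_antisymm hle (hφ0 0 0)
  have hf0 : f 0 = 0 := by
    have hD := hbd 0 0
    have hDeq : Dop f (0:X) (0:X) = -((22:ℝ) • f 0) := by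
      simp only [Dop, smul_zero, add_zero, sub_zero]
      module
    rw [hDeq, hφ00] at hD
    have h22 : (22:ℝ) • f 0 = 0 := norm_le_zero_iff.mp (by rwa [norm_neg] at hD)
    have := congrArg (fun z => ((22:ℝ))⁻¹ • z) h22
    simpa [smul_smul] using this
  have hK : ∀ y : X, ‖f (4 • y) - (20:ℝ) • f (2 • y) + (64:ℝ) • f y‖
      ≤ (1/3) * φ (2 • y) y + (16/3) * φ y y := by
    intro y
    have e : (12:ℝ) • (f (4 • y) - (20:ℝ) • f (2 • y) + (64:ℝ) • f y)
        = (4:ℝ) • Dop f (2 • y) y - (64:ℝ) • Dop f y y := by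
      simp only [Dop]
      rw [show (2:ℕ) • y + 2 • y = (4:ℕ) • y by abel,
          show (2:ℕ) • y - 2 • y = (0:X) by abel,
          show (2:ℕ) • y + y = (3:ℕ) • y by abel,
          show (2:ℕ) • y - y = y by abel,
          show y + 2 • y = (3:ℕ) • y by abel,
          show y - 2 • y = -y by abel,
          show y + y = (2:ℕ) • y by abel,
          show y - y = (0:X) by abel,
          heven, hf0]
      module
    have h1 := hbd (2 • y) y
    have h2 := hbd y y
    have hb : ‖(4:ℝ) • Dop f (2 • y) y - (64:ℝ) • Dop f y y‖
        ≤ 4 * φ (2 • y) y + 64 * φ y y := by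
      refine le_trans (norm_sub_le _ _) ?_
      rw [norm_smul, norm_smul, Real.norm_eq_abs, Real.norm_eq_abs,
        abs_of_nonneg (by norm_num : (0:ℝ) ≤ 4), abs_of_nonneg (by norm_num : (0:ℝ) ≤ 64)]
      have n1 := norm_nonneg (Dop f (2 • y) y)
      have n2 := norm_nonneg (Dop f y y)
      nlinarith
    have e3 : ‖(12:ℝ) • (f (4 • y) - (20:ℝ) • f (2 • y) + (64:ℝ) • f y)‖
        = 12 * ‖f (4 • y) - (20:ℝ) • f (2 • y) + (64:ℝ) • f y‖ := by
      rw [norm_smul, Real.norm_eq_abs, abs_of_nonneg (by norm_num : (0:ℝ) ≤ 12)]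
    rw [e] at e3
    have hb2 := hb
    rw [e3] at hb2
    linarith
  have hKw : ∀ (x : X) (n : ℕ),
      ‖f (4 • hv (n+1) x) - (20:ℝ) • f (2 • hv (n+1) x) + (64:ℝ) • f (hv (n+1) x)‖
        ≤ wfun φ n x := by
    intro x n
    unfold wfun
    rw [← hv_two n x]
    exact hK (hv (n+1) x)
  -- summability of the error series
  have hw0 : ∀ (n : ℕ) (x : X), 0 ≤ wfun φ n x := fun n x => wfun_nonneg φ hφ0 n x
  have hsum16 : ∀ x : X, Summable (fun n : ℕ => (16:ℝ)^n * wfun φ n x) := by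
    intro x
    have hS := hsum' x
    have ht1' : Summable (fun i : ℕ => (16:ℝ)^(i+1) * φ (hv (i+1) x) (hv (i+1+1) x)) := by
      refine Summable.of_nonneg_of_le (fun i => ?_) (fun i => ?_) hS
      · exact mul_nonneg (pow_nonneg (by norm_num) _) (hφ0 _ _)
      · have h1 := hφ0 (hv (i+1) x) (hv (i+1) x)
        have h2 : (0:ℝ) ≤ (16:ℝ)^(i+1) := pow_nonneg (by norm_num) _
        show (16:ℝ)^(i+1) * φ (hv (i+1) x) (hv (i+1+1) x)
          ≤ (16:ℝ)^(i+1) * (φ (hv (i+1) x) (hv (i+2) x) + φ (hv (i+1) x) (hv (i+1) x))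
        have : hv (i+1+1) x = hv (i+2) (X := X) x := rfl
        rw [this]
        nlinarith [hφ0 (hv (i+1) x) (hv (i+2) x)]
    have ht1 : Summable (fun i : ℕ => (16:ℝ)^i * φ (hv i x) (hv (i+1) x)) := by
      rw [← summable_nat_add_iff 1]
      exact ht1'
    have ht2 : Summable (fun i : ℕ => (16:ℝ)^i * φ (hv (i+1) x) (hv (i+1) x)) := by
      refine Summable.of_nonneg_of_le (fun i => ?_) (fun i => ?_) (hS.mul_left (1/16))
      · exact mul_nonneg (pow_nonneg (by norm_num) _) (hφ0 _ _)
      · have h1 := hφ0 (hv (i+1) x) (hv (i+2) x)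
        have h2 : (0:ℝ) ≤ (16:ℝ)^i := pow_nonneg (by norm_num) _
        have e : (1/16) * ((16:ℝ)^(i+1) * (φ (hv (i+1) x) (hv (i+2) x) + φ (hv (i+1) x) (hv (i+1) x)))
            = (16:ℝ)^i * (φ (hv (i+1) x) (hv (i+2) x) + φ (hv (i+1) x) (hv (i+1) x)) := by
          rw [pow_succ]; ring
        rw [e]
        nlinarith [hφ0 (hv (i+1) x) (hv (i+1) x)]
    refine Summable.congr ((ht1.mul_left (1/3)).add (ht2.mul_left (16/3))) (fun n => ?_)
    unfold wfun
    ring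
  have hsum4 : ∀ x : X, Summable (fun n : ℕ => (4:ℝ)^n * wfun φ n x) := by
    intro x
    refine Summable.of_nonneg_of_le (fun n => ?_) (fun n => ?_) (hsum16 x)
    · exact mul_nonneg (pow_nonneg (by norm_num) _) (hw0 n x)
    · exact mul_le_mul_of_nonneg_right
        (pow_le_pow_left₀ (by norm_num) (by norm_num : (4:ℝ) ≤ 16) n) (hw0 n x)
  -- the two approximating sequences and their limits
  have hstep4 : ∀ (x : X) (n : ℕ),
      ((4:ℝ)^n • (f (2 • hv n x) - (16:ℝ) • f (hv n x)))
        - ((4:ℝ)^(n+1) • (f (2 • hv (n+1) x) - (16:ℝ) • f (hv (n+1) x)))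
      = (4:ℝ)^n • (f (4 • hv (n+1) x) - (20:ℝ) • f (2 • hv (n+1) x) + (64:ℝ) • f (hv (n+1) x)) := by
    intro x n
    rw [← hv_two n x,
      show (2:ℕ) • ((2:ℕ) • hv (n+1) x) = (4:ℕ) • hv (n+1) x by abel]
    module
  have hstep16 : ∀ (x : X) (n : ℕ),
      ((16:ℝ)^n • (f (2 • hv n x) - (4:ℝ) • f (hv n x)))
        - ((16:ℝ)^(n+1) • (f (2 • hv (n+1) x) - (4:ℝ) • f (hv (n+1) x)))
      = (16:ℝ)^n • (f (4 • hv (n+1) x) - (20:ℝ) • f (2 • hv (n+1) x) + (64:ℝ) • f (hv (n+1) x)) := by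
    intro x n
    rw [← hv_two n x,
      show (2:ℕ) • ((2:ℕ) • hv (n+1) x) = (4:ℕ) • hv (n+1) x by abel]
    module
  have hdist4 : ∀ (x : X) (n : ℕ),
      dist ((4:ℝ)^n • (f (2 • hv n x) - (16:ℝ) • f (hv n x)))
           ((4:ℝ)^(n+1) • (f (2 • hv (n+1) x) - (16:ℝ) • f (hv (n+1) x)))
        ≤ (4:ℝ)^n * wfun φ n x := by
    intro x n
    rw [dist_eq_norm, hstep4 x n, norm_smul, Real.norm_eq_abs,
      abs_of_nonneg (pow_nonneg (by norm_num : (0:ℝ) ≤ 4) n)]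
    exact mul_le_mul_of_nonneg_left (hKw x n) (pow_nonneg (by norm_num) n)
  have hdist16 : ∀ (x : X) (n : ℕ),
      dist ((16:ℝ)^n • (f (2 • hv n x) - (4:ℝ) • f (hv n x)))
           ((16:ℝ)^(n+1) • (f (2 • hv (n+1) x) - (4:ℝ) • f (hv (n+1) x)))
        ≤ (16:ℝ)^n * wfun φ n x := by
    intro x n
    rw [dist_eq_norm, hstep16 x n, norm_smul, Real.norm_eq_abs,
      abs_of_nonneg (pow_nonneg (by norm_num : (0:ℝ) ≤ 16) n)]
    exact mul_le_mul_of_nonneg_left (hKw x n) (pow_nonneg (by norm_num) n)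
  have hconv4 : ∀ x : X, ∃ L : Y, Tendsto
      (fun n : ℕ => (4:ℝ)^n • (f (2 • hv n x) - (16:ℝ) • f (hv n x))) atTop (𝓝 L) := by
    intro x
    apply cauchySeq_tendsto_of_complete
    apply cauchySeq_of_summable_dist
    refine Summable.of_nonneg_of_le (fun n => dist_nonneg) (fun n => hdist4 x n) (hsum4 x)
  have hconv16 : ∀ x : X, ∃ L : Y, Tendsto
      (fun n : ℕ => (16:ℝ)^n • (f (2 • hv n x) - (4:ℝ) • f (hv n x))) atTop (𝓝 L) := by
    intro x
    apply cauchySeq_tendsto_of_complete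
    apply cauchySeq_of_summable_dist
    refine Summable.of_nonneg_of_le (fun n => dist_nonneg) (fun n => hdist16 x n) (hsum16 x)
  choose Qg hQg using hconv4
  choose Qh hQh using hconv16
  -- error bounds for the limits
  have hQgbd : ∀ x : X, ‖(f (2 • x) - (16:ℝ) • f x) - Qg x‖ ≤ ∑' n : ℕ, (4:ℝ)^n * wfun φ n x := by
    intro x
    have h := dist_le_tsum_of_dist_le_of_tendsto₀ _ (fun n => hdist4 x n) (hsum4 x) (hQg x)
    rw [dist_eq_norm] at h
    simpa [hv_zero] using h
  have hQhbd : ∀ x : X, ‖(f (2 • x) - (4:ℝ) • f x) - Qh x‖ ≤ ∑' n : ℕ, (16:ℝ)^n * wfun φ n x := by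
    intro x
    have h := dist_le_tsum_of_dist_le_of_tendsto₀ _ (fun n => hdist16 x n) (hsum16 x) (hQh x)
    rw [dist_eq_norm] at h
    simpa [hv_zero] using h
  -- structural properties of Qg
  have hQg_even : ∀ x : X, Qg (-x) = Qg x := by
    intro x
    refine tendsto_nhds_unique ?_ (hQg x)
    refine Tendsto.congr (fun n => ?_) (hQg (-x))
    rw [hv_neg, show (2:ℕ) • (-(hv n x)) = -((2:ℕ) • hv n x) by abel, heven, heven]
  have hQh_even : ∀ x : X, Qh (-x) = Qh x := by
    intro x
    refine tendsto_nhds_unique ?_ (hQh x)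
    refine Tendsto.congr (fun n => ?_) (hQh (-x))
    rw [hv_neg, show (2:ℕ) • (-(hv n x)) = -((2:ℕ) • hv n x) by abel, heven, heven]
  have hQg_zero : Qg 0 = 0 := by
    have hz : Tendsto (fun n : ℕ => (4:ℝ)^n • (f (2 • hv n (0:X)) - (16:ℝ) • f (hv n (0:X))))
        atTop (𝓝 (0:Y)) := by
      refine Tendsto.congr (fun n => ?_) (tendsto_const_nhds : Tendsto (fun _ : ℕ => (0:Y)) atTop (𝓝 0))
      rw [hv_zero_pt]
      simp [hf0]
    exact tendsto_nhds_unique (hQg 0) hz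
  have hQh_zero : Qh 0 = 0 := by
    have hz : Tendsto (fun n : ℕ => (16:ℝ)^n • (f (2 • hv n (0:X)) - (4:ℝ) • f (hv n (0:X))))
        atTop (𝓝 (0:Y)) := by
      refine Tendsto.congr (fun n => ?_) (tendsto_const_nhds : Tendsto (fun _ : ℕ => (0:Y)) atTop (𝓝 0))
      rw [hv_zero_pt]
      simp [hf0]
    exact tendsto_nhds_unique (hQh 0) hz
  have hQg_hom : ∀ x : X, Qg (2 • x) = (4:ℕ) • Qg x := by
    intro x
    have hshift : Tendsto (fun n : ℕ =>
        (4:ℝ)^(n+1) • (f (2 • hv (n+1) (2 • x)) - (16:ℝ) • f (hv (n+1) (2 • x)))) atTop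
        (𝓝 (Qg (2 • x))) := (hQg (2 • x)).comp (tendsto_add_atTop_nat 1)
    have heq : ∀ n : ℕ,
        (4:ℝ)^(n+1) • (f (2 • hv (n+1) (2 • x)) - (16:ℝ) • f (hv (n+1) (2 • x)))
        = (4:ℝ) • ((4:ℝ)^n • (f (2 • hv n x) - (16:ℝ) • f (hv n x))) := by
      intro n
      have e1 : hv (n+1) ((2:ℕ) • x) = hv n x := by rw [hv_nsmul, hv_two]
      rw [e1, pow_succ, mul_comm, mul_smul]
    have h3 := Tendsto.congr heq hshift
    have h4 := (hQg x).const_smul (4:ℝ)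
    have h5 := tendsto_nhds_unique h3 h4
    rw [h5, ← Nat.cast_smul_eq_nsmul ℝ (4:ℕ) (Qg x)]
    norm_num
  have hQh_hom : ∀ x : X, Qh (2 • x) = (16:ℕ) • Qh x := by
    intro x
    have hshift : Tendsto (fun n : ℕ =>
        (16:ℝ)^(n+1) • (f (2 • hv (n+1) (2 • x)) - (4:ℝ) • f (hv (n+1) (2 • x)))) atTop
        (𝓝 (Qh (2 • x))) := (hQh (2 • x)).comp (tendsto_add_atTop_nat 1)
    have heq : ∀ n : ℕ,
        (16:ℝ)^(n+1) • (f (2 • hv (n+1) (2 • x)) - (4:ℝ) • f (hv (n+1) (2 • x)))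
        = (16:ℝ) • ((16:ℝ)^n • (f (2 • hv n x) - (4:ℝ) • f (hv n x))) := by
      intro n
      have e1 : hv (n+1) ((2:ℕ) • x) = hv n x := by rw [hv_nsmul, hv_two]
      rw [e1, pow_succ, mul_comm, mul_smul]
    have h3 := Tendsto.congr heq hshift
    have h4 := (hQh x).const_smul (16:ℝ)
    have h5 := tendsto_nhds_unique h3 h4
    rw [h5, ← Nat.cast_smul_eq_nsmul ℝ (16:ℕ) (Qh x)]
    norm_num
  have hQg_mixed : MixedEq Qg :=
    mixedEq_of_tendsto f φ hφ0 hbd hlim' 4 (by norm_num) (by norm_num) 16 (by norm_num) Qg hQg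
  have hQh_mixed : MixedEq Qh :=
    mixedEq_of_tendsto f φ hφ0 hbd hlim' 16 (by norm_num) (by norm_num) 4 (by norm_num) Qh hQh
  have hQgquad : IsQuadratic Qg := quad_of_mixed Qg hQg_even hQg_zero hQg_hom hQg_mixed
  have hQhquart : IsQuartic Qh := quart_of_mixed Qh hQh_even hQh_zero hQh_hom hQh_mixed
  -- the main bound
  have hmain : ∀ x : X, ‖f x - (-(1/12:ℝ)) • Qg x - ((1/12:ℝ)) • Qh x‖
      ≤ (1/12) * ∑' i : ℕ, ((4:ℝ)^i + 16^i) * wfun φ i x := by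
    intro x
    have hid : f x - (-(1/12:ℝ)) • Qg x - ((1/12:ℝ)) • Qh x
        = (1/12:ℝ) • (((f (2 • x) - (4:ℝ) • f x) - Qh x)
            - ((f (2 • x) - (16:ℝ) • f x) - Qg x)) := by
      module
    rw [hid, norm_smul, Real.norm_eq_abs, abs_of_nonneg (by norm_num : (0:ℝ) ≤ 1/12)]
    have b1 := hQgbd x
    have b2 := hQhbd x
    have htri : ‖(((f (2 • x) - (4:ℝ) • f x) - Qh x) - ((f (2 • x) - (16:ℝ) • f x) - Qg x))‖
        ≤ (∑' n : ℕ, (16:ℝ)^n * wfun φ n x) + ∑' n : ℕ, (4:ℝ)^n * wfun φ n x :=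
      le_trans (norm_sub_le _ _) (add_le_add b2 b1)
    have hsumeq : ∑' i : ℕ, ((4:ℝ)^i + 16^i) * wfun φ i x
        = (∑' n : ℕ, (4:ℝ)^n * wfun φ n x) + ∑' n : ℕ, (16:ℝ)^n * wfun φ n x := by
      rw [← Summable.tsum_add (hsum4 x) (hsum16 x)]
      exact tsum_congr (fun i => by ring)
    rw [hsumeq]
    linarith
  -- the B function and its decay
  have hBnn : ∀ z : X, 0 ≤ (1/12:ℝ) * ∑' i : ℕ, ((4:ℝ)^i + 16^i) * wfun φ i z := by
    intro z
    have : 0 ≤ ∑' i : ℕ, ((4:ℝ)^i + 16^i) * wfun φ i z := by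
      refine tsum_nonneg (fun i => mul_nonneg ?_ (hw0 i z))
      positivity
    linarith
  have hBsum : ∀ z : X, Summable (fun i : ℕ => ((4:ℝ)^i + 16^i) * wfun φ i z) := by
    intro z
    refine Summable.congr ((hsum4 z).add (hsum16 z)) (fun i => by ring)
  have hBtail : ∀ x : X, Tendsto
      (fun n : ℕ => (16:ℝ)^n * ((1/12) * ∑' i : ℕ, ((4:ℝ)^i + 16^i) * wfun φ i (hv n x)))
      atTop (𝓝 0) := by
    intro x
    have hwshift : ∀ i n : ℕ, wfun φ i (hv n x) = wfun φ (i+n) x := by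
      intro i n
      unfold wfun
      rw [hv_hv, hv_hv, show i+1+n = i+n+1 by omega]
    have hsumshift : ∀ n : ℕ, Summable (fun i : ℕ => (16:ℝ)^(i+n) * wfun φ (i+n) x) :=
      fun n => (summable_nat_add_iff n).mpr (hsum16 x)
    have hle : ∀ n : ℕ, (16:ℝ)^n * ((1/12) * ∑' i : ℕ, ((4:ℝ)^i + 16^i) * wfun φ i (hv n x))
        ≤ (1/6) * ∑' i : ℕ, (16:ℝ)^(i+n) * wfun φ (i+n) x := by
      intro n
      have e1 : (16:ℝ)^n * ((1/12) * ∑' i : ℕ, ((4:ℝ)^i + 16^i) * wfun φ i (hv n x))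
          = (1/12) * ∑' i : ℕ, ((16:ℝ)^n * (((4:ℝ)^i + 16^i) * wfun φ (i+n) x)) := by
        rw [tsum_mul_left]
        rw [tsum_congr (fun i => by rw [hwshift i n])]
        ring
      rw [e1]
      have hterm : ∀ i : ℕ, (16:ℝ)^n * (((4:ℝ)^i + 16^i) * wfun φ (i+n) x)
          ≤ 2 * ((16:ℝ)^(i+n) * wfun φ (i+n) x) := by
        intro i
        have h1 : (4:ℝ)^i ≤ 16^i := pow_le_pow_left₀ (by norm_num) (by norm_num) i
        have h2 : (16:ℝ)^(i+n) = 16^i * 16^n := pow_add 16 i n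
        have h3 := hw0 (i+n) x
        have h4 : (0:ℝ) ≤ 16^i := pow_nonneg (by norm_num) i
        have h5 : (0:ℝ) ≤ 16^n := pow_nonneg (by norm_num) n
        calc (16:ℝ)^n * (((4:ℝ)^i + 16^i) * wfun φ (i+n) x)
            = ((4:ℝ)^i + 16^i) * (16^n * wfun φ (i+n) x) := by ring
          _ ≤ (2 * 16^i) * (16^n * wfun φ (i+n) x) :=
              mul_le_mul_of_nonneg_right (by linarith) (mul_nonneg h5 h3)
          _ = 2 * ((16:ℝ)^(i+n) * wfun φ (i+n) x) := by rw [h2]; ring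
      have hsummleft : Summable (fun i : ℕ => (16:ℝ)^n * (((4:ℝ)^i + 16^i) * wfun φ (i+n) x)) := by
        refine Summable.of_nonneg_of_le (fun i => ?_) hterm ((hsumshift n).mul_left 2)
        have := hw0 (i+n) x
        positivity
      have := Summable.tsum_le_tsum hterm hsummleft ((hsumshift n).mul_left 2)
      rw [tsum_mul_left, tsum_mul_left] at this
      rw [tsum_mul_left]
      linarith
    have h0le : ∀ n : ℕ, (0:ℝ) ≤ (16:ℝ)^n * ((1/12) * ∑' i : ℕ, ((4:ℝ)^i + 16^i) * wfun φ i (hv n x)) := by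
      intro n
      exact mul_nonneg (pow_nonneg (by norm_num) n) (hBnn (hv n x))
    have htail : Tendsto (fun n : ℕ => (1/6:ℝ) * ∑' i : ℕ, (16:ℝ)^(i+n) * wfun φ (i+n) x)
        atTop (𝓝 0) := by
      have h := (tendsto_sum_nat_add (fun j : ℕ => (16:ℝ)^j * wfun φ j x)).const_mul (1/6:ℝ)
      simpa using h
    exact squeeze_zero h0le hle htail
  -- finish
  refine ⟨fun x => (-(1/12:ℝ)) • Qg x, fun x => ((1/12:ℝ)) • Qh x,
    isQuadratic_smul hQgquad _, isQuartic_smul hQhquart _, fun x => hmain x, ?_⟩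
  intro Q₁' Q₂' hq1 hq2 hbound
  have hb' : ∀ z : X, ‖f z - Q₁' z - Q₂' z‖
      ≤ (1/12) * ∑' i : ℕ, ((4:ℝ)^i + 16^i) * wfun φ i z := fun z => hbound z
  have hP1quad : IsQuadratic (fun z : X => Q₁' z - (-(1/12:ℝ)) • Qg z) :=
    isQuadratic_sub hq1 (isQuadratic_smul hQgquad _)
  have hP2quart : IsQuartic (fun z : X => Q₂' z - ((1/12:ℝ)) • Qh z) :=
    isQuartic_sub hq2 (isQuartic_smul hQhquart _)
  have hPbd : ∀ z : X, ‖(Q₁' z - (-(1/12:ℝ)) • Qg z) + (Q₂' z - ((1/12:ℝ)) • Qh z)‖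
      ≤ 2 * ((1/12) * ∑' i : ℕ, ((4:ℝ)^i + 16^i) * wfun φ i z) := by
    intro z
    have t1 := hb' z
    have t2 := hmain z
    have hidq : (Q₁' z - (-(1/12:ℝ)) • Qg z) + (Q₂' z - ((1/12:ℝ)) • Qh z)
        = (f z - (-(1/12:ℝ)) • Qg z - ((1/12:ℝ)) • Qh z) - (f z - Q₁' z - Q₂' z) := by
      abel
    rw [hidq]
    refine le_trans (norm_sub_le _ _) ?_
    linarith
  have hP1x : ∀ z : X, Q₁' z - (-(1/12:ℝ)) • Qg z = 0 := by
    intro x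
    have hseq : ∀ n : ℕ, ‖(Q₁' x - (-(1/12:ℝ)) • Qg x) + ((1/4:ℝ))^n • (Q₂' x - ((1/12:ℝ)) • Qh x)‖
        ≤ 2 * ((16:ℝ)^n * ((1/12) * ∑' i : ℕ, ((4:ℝ)^i + 16^i) * wfun φ i (hv n x))) := by
      intro n
      have e1 := isQuadratic_shrink hP1quad n x
      have e2 := isQuartic_shrink hP2quart n x
      have e3 : (Q₁' x - (-(1/12:ℝ)) • Qg x) + ((1/4:ℝ))^n • (Q₂' x - ((1/12:ℝ)) • Qh x)
          = (4:ℝ)^n • ((Q₁' (hv n x) - (-(1/12:ℝ)) • Qg (hv n x))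
            + (Q₂' (hv n x) - ((1/12:ℝ)) • Qh (hv n x))) := by
        rw [e1, e2, smul_smul, ← mul_pow]
        norm_num
      rw [e3, norm_smul, Real.norm_eq_abs,
        abs_of_nonneg (pow_nonneg (by norm_num : (0:ℝ) ≤ 4) n)]
      have hb := hPbd (hv n x)
      have h4_16 : (4:ℝ)^n ≤ 16^n := pow_le_pow_left₀ (by norm_num) (by norm_num) n
      calc (4:ℝ)^n * ‖(Q₁' (hv n x) - (-(1/12:ℝ)) • Qg (hv n x))
            + (Q₂' (hv n x) - ((1/12:ℝ)) • Qh (hv n x))‖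
          ≤ (16:ℝ)^n * ‖(Q₁' (hv n x) - (-(1/12:ℝ)) • Qg (hv n x))
            + (Q₂' (hv n x) - ((1/12:ℝ)) • Qh (hv n x))‖ :=
            mul_le_mul_of_nonneg_right h4_16 (norm_nonneg _)
        _ ≤ (16:ℝ)^n * (2 * ((1/12) * ∑' i : ℕ, ((4:ℝ)^i + 16^i) * wfun φ i (hv n x))) :=
            mul_le_mul_of_nonneg_left hb (pow_nonneg (by norm_num) n)
        _ = 2 * ((16:ℝ)^n * ((1/12) * ∑' i : ℕ, ((4:ℝ)^i + 16^i) * wfun φ i (hv n x))) := by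
            ring
    have hT1 : Tendsto (fun n : ℕ =>
        (Q₁' x - (-(1/12:ℝ)) • Qg x) + ((1/4:ℝ))^n • (Q₂' x - ((1/12:ℝ)) • Qh x)) atTop
        (𝓝 (Q₁' x - (-(1/12:ℝ)) • Qg x)) := by
      have hp : Tendsto (fun n : ℕ => ((1/4:ℝ))^n) atTop (𝓝 0) :=
        tendsto_pow_atTop_nhds_zero_of_lt_one (by norm_num) (by norm_num)
      have hp2 := hp.smul_const (Q₂' x - ((1/12:ℝ)) • Qh x)
      rw [zero_smul] at hp2
      simpa using tendsto_const_nhds.add hp2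
    have hT0 : Tendsto (fun n : ℕ =>
        ‖(Q₁' x - (-(1/12:ℝ)) • Qg x) + ((1/4:ℝ))^n • (Q₂' x - ((1/12:ℝ)) • Qh x)‖) atTop
        (𝓝 0) := by
      refine squeeze_zero (fun n => norm_nonneg _) hseq ?_
      have h := (hBtail x).const_mul (2:ℝ)
      simpa using h
    have := tendsto_nhds_unique hT1.norm hT0
    exact norm_eq_zero.mp this
  have hP2x : ∀ z : X, Q₂' z - ((1/12:ℝ)) • Qh z = 0 := by
    intro x
    have hseq : ∀ n : ℕ, ‖Q₂' x - ((1/12:ℝ)) • Qh x‖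
        ≤ 2 * ((16:ℝ)^n * ((1/12) * ∑' i : ℕ, ((4:ℝ)^i + 16^i) * wfun φ i (hv n x))) := by
      intro n
      have e2 := isQuartic_shrink hP2quart n x
      have hb := hPbd (hv n x)
      rw [hP1x (hv n x), zero_add] at hb
      have e4 : ‖Q₂' x - ((1/12:ℝ)) • Qh x‖ = (16:ℝ)^n * ‖Q₂' (hv n x) - ((1/12:ℝ)) • Qh (hv n x)‖ := by
        rw [e2, norm_smul, Real.norm_eq_abs,
          abs_of_nonneg (pow_nonneg (by norm_num : (0:ℝ) ≤ 16) n)]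
      rw [e4]
      have h5 : (0:ℝ) ≤ 16^n := pow_nonneg (by norm_num) n
      calc (16:ℝ)^n * ‖Q₂' (hv n x) - ((1/12:ℝ)) • Qh (hv n x)‖
          ≤ (16:ℝ)^n * (2 * ((1/12) * ∑' i : ℕ, ((4:ℝ)^i + 16^i) * wfun φ i (hv n x))) :=
            mul_le_mul_of_nonneg_left hb h5
        _ = 2 * ((16:ℝ)^n * ((1/12) * ∑' i : ℕ, ((4:ℝ)^i + 16^i) * wfun φ i (hv n x))) := by
            ring
    have hle : ‖Q₂' x - ((1/12:ℝ)) • Qh x‖ ≤ 0 := by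
      have h : Tendsto (fun n : ℕ =>
          2 * ((16:ℝ)^n * ((1/12) * ∑' i : ℕ, ((4:ℝ)^i + 16^i) * wfun φ i (hv n x))))
          atTop (𝓝 0) := by
        have h2 := (hBtail x).const_mul (2:ℝ)
        simpa using h2
      exact ge_of_tendsto' h hseq
    exact norm_eq_zero.mp (le_antisymm hle (norm_nonneg _))
  constructor
  · funext z
    exact sub_eq_zero.mp (hP1x z)
  · funext z
    exact sub_eq_zero.mp (hP2x z)
end

section
/- Let X be a real normed space, Y a real Banach space, let p be a real number with 0 ≤ p < 2 and θ ≥ 0. Suppose f : X → Y satisfies f(0) = 0 and ‖D_f(x,y)‖ ≤ θ·(‖x‖^p + ‖y‖^p) for all x, y ∈ X. Then there exist a unique quadratic function Q₁ : X → Y, a unique cubic function C : X → Y and a unique quartic function Q₂ : X → Y such that ‖f(x) − Q₁(x) − C(x) − Q₂(x)‖ ≤ (((33 + 2^p)/9)·(1/(4 − 2^p) + 4/(16 − 2^p)) + 3/(2·(8 − 2^p)))·θ·‖x‖^p for all x ∈ X. -/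
open Filter Topology

/-!
Split `f` into its even and odd parts, both of which inherit the bound on `D_f`.
For the odd part `fₒ`, the identity `6 (fₒ(2x) - 8 fₒ(x)) = 4 D(x,x) - D(0,x)` shows that `fₒ` is
approximately `8`-homogeneous under `x ↦ 2x`, so Hyers' direct method produces
`C x = lim 8⁻ⁿ fₒ(2ⁿ x)`. For the even part `fₑ`, `D(2x,x) - 4 D(0,x)` controls
`fₑ(4x) - 20 fₑ(2x) + 64 fₑ(x)`; factoring `t² - 20t + 64 = (t - 4)(t - 16)` writes `fₑ` as a sum of
an approximately `4`-homogeneous and an approximately `16`-homogeneous function, whose limits are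
`Q₁` and `Q₂`. Each limit inherits `D = 0`, its parity and its exact homogeneity, and these force
the quadratic, cubic and quartic equations. Uniqueness: for `p < 2` the growth rates `4ⁿ, 8ⁿ, 16ⁿ`
along `2ⁿ x` all beat `2ᵖⁿ`, so a sum of a quadratic, a cubic and a quartic map bounded by
`M ‖x‖ ^ p` vanishes.
-/

section Identities

variable {X Y : Type*} [AddCommGroup X] [AddCommGroup Y]

lemma Dop_add (φ ψ : X → Y) (x y : X) :
    Dop (fun z => φ z + ψ z) x y = Dop φ x y + Dop ψ x y := by
  simp only [Dop]; abel

lemma Dop_sub (φ ψ : X → Y) (x y : X) :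
    Dop (fun z => φ z - ψ z) x y = Dop φ x y - Dop ψ x y := by
  simp only [Dop]; abel

lemma Dop_comp (φ : X → Y) (L : X →+ X) (x y : X) :
    Dop (fun z => φ (L z)) x y = Dop φ (L x) (L y) := by
  simp only [Dop, map_add, map_sub, map_nsmul]

lemma Dop_comp_nsmul (φ : X → Y) (m : ℕ) (x y : X) :
    Dop (fun z => φ (m • z)) x y = Dop φ (m • x) (m • y) :=
  Dop_comp φ (nsmulAddMonoidHom m) x y

lemma Dop_two_nsmul_sub_Dop_zero_of_even {φ : X → Y} (he : Function.Even φ) (h0 : φ 0 = 0)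
    (x : X) :
    3 • (φ (2 • 2 • x) - 20 • φ (2 • x) + 64 • φ x) = Dop φ (2 • x) x - 4 • Dop φ 0 x := by
  have h₁ : 2 • x + 2 • x = 2 • 2 • x := (two_nsmul _).symm
  have h₂ : 2 • x + x = 3 • x := by abel
  have h₃ : 2 • x - x = x := by abel
  simp only [Dop, h₁, h₂, h₃, sub_self, zero_add, zero_sub, he _, h0]
  abel

lemma Dop_self_sub_Dop_zero_of_odd {φ : X → Y} (ho : Function.Odd φ) (h0 : φ 0 = 0) (x : X) :
    6 • (φ (2 • x) - 8 • φ x) = 4 • Dop φ x x - Dop φ 0 x := by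
  have h₁ : x + 2 • x = 3 • x := by abel
  have h₂ : x - 2 • x = -x := by abel
  have h₃ : x + x = 2 • x := (two_nsmul _).symm
  simp only [Dop, h₁, h₂, h₃, sub_self, zero_add, zero_sub, ho _, h0]
  abel

lemma IsQuadratic.sub {g g' : X → Y} (hg : IsQuadratic g) (hg' : IsQuadratic g') :
    IsQuadratic (g - g') := fun x y => by
  simp only [Pi.sub_apply]
  linear_combination (norm := module) hg x y - hg' x y

lemma IsCubic.sub {c c' : X → Y} (hc : IsCubic c) (hc' : IsCubic c') :
    IsCubic (c - c') := fun x y => by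
  simp only [Pi.sub_apply]
  linear_combination (norm := module) hc x y - hc' x y

lemma IsQuartic.sub {q q' : X → Y} (hq : IsQuartic q) (hq' : IsQuartic q') :
    IsQuartic (q - q') := fun x y => by
  simp only [Pi.sub_apply]
  linear_combination (norm := module) hq x y - hq' x y

variable [Module ℝ Y]

lemma Dop_smul (a : ℝ) (φ : X → Y) (x y : X) :
    Dop (fun z => a • φ z) x y = a • Dop φ x y := by
  simp only [Dop]; module

/-- `D(0, y) = 0` expresses `φ (3 • y)` through `φ y`, which leaves this three-term relation. -/
lemma map_add_two_nsmul_add_map_sub_two_nsmul {φ : X → Y} {ε K : ℝ}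
    (hD : ∀ x y, Dop φ x y = 0) (hpar : ∀ x, φ (-x) = ε • φ x)
    (hs : ∀ x, φ (2 • x) = K • φ x) (x y : X) :
    φ (x + 2 • y) + φ (x - 2 • y) =
      (4 : ℝ) • (φ (x + y) + φ (x - y)) - (6 : ℝ) • φ x + ((1 + ε) * (K - 4)) • φ y := by
  have h0 : φ 0 = 0 := by
    have e := hD 0 0
    simp only [Dop, add_zero, sub_zero, smul_zero] at e
    linear_combination (norm := module) (-1 / 22 : ℝ) • e
  have e₀ := hD 0 y
  simp only [Dop, zero_add, zero_sub, hpar, hs, h0] at e₀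
  have e := hD x y
  rw [Dop, hs y] at e
  linear_combination (norm := module) (1 / 3 : ℝ) • (e - e₀)

lemma isQuadratic_of_Dop_eq_zero {g : X → Y} (hD : ∀ x y, Dop g x y = 0) (he : Function.Even g)
    (hs : ∀ x, g (2 • x) = (4 : ℝ) • g x) : IsQuadratic g := by
  have key := map_add_two_nsmul_add_map_sub_two_nsmul hD (ε := 1)
    (fun x => by rw [he x, one_smul]) hs
  intro x y
  have e₁ := key (2 • x) y
  rw [← smul_add, ← smul_sub, hs, hs, hs] at e₁
  have e₂ := key y x
  rw [add_comm y (2 • x), add_comm y x, ← neg_sub x y, ← neg_sub (2 • x) y, he, he] at e₂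
  linear_combination (norm := module) (-1 / 12 : ℝ) • e₁ - (1 / 3 : ℝ) • e₂

lemma isCubic_of_Dop_eq_zero {c : X → Y} (hD : ∀ x y, Dop c x y = 0) (ho : Function.Odd c)
    (hs : ∀ x, c (2 • x) = (8 : ℝ) • c x) : IsCubic c := by
  intro x y
  have e := map_add_two_nsmul_add_map_sub_two_nsmul hD (ε := -1)
    (fun x => by rw [ho x, neg_one_smul]) hs (2 • x) y
  rw [← smul_add, ← smul_sub, hs, hs, hs] at e
  linear_combination (norm := module) (-1 / 4 : ℝ) • e

lemma isQuartic_of_Dop_eq_zero {q : X → Y} (hD : ∀ x y, Dop q x y = 0) (he : Function.Even q)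
    (hs : ∀ x, q (2 • x) = (16 : ℝ) • q x) : IsQuartic q := by
  intro x y
  have e := map_add_two_nsmul_add_map_sub_two_nsmul hD (ε := 1)
    (fun x => by rw [he x, one_smul]) hs (2 • x) y
  rw [← smul_add, ← smul_sub, hs, hs, hs] at e
  linear_combination (norm := module) (-1 / 4 : ℝ) • e

lemma IsQuadratic.map_two_nsmul {g : X → Y} (hg : IsQuadratic g) (x : X) :
    g (2 • x) = (4 : ℝ) • g x := by
  have h0 := hg 0 0
  have e := hg x x
  rw [sub_self, ← two_nsmul] at e
  rw [add_zero, sub_zero] at h0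
  linear_combination (norm := module) e + (1 / 2 : ℝ) • h0

lemma IsCubic.map_two_nsmul {c : X → Y} (hc : IsCubic c) (x : X) :
    c (2 • x) = (8 : ℝ) • c x := by
  have e := hc x 0
  rw [add_zero, sub_zero, add_zero, sub_zero] at e
  linear_combination (norm := module) (1 / 2 : ℝ) • e

lemma IsQuartic.map_two_nsmul {q : X → Y} (hq : IsQuartic q) (x : X) :
    q (2 • x) = (16 : ℝ) • q x := by
  have h0 := hq 0 0
  have e := hq x 0
  simp only [smul_zero, add_zero, sub_zero] at h0 e
  linear_combination (norm := module) (1 / 2 : ℝ) • e + (1 / 8 : ℝ) • h0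

lemma map_two_pow_nsmul {u : X → Y} {K : ℝ} (hu : ∀ x, u (2 • x) = K • u x) (n : ℕ)
    (x : X) :
    u (2 ^ n • x) = K ^ n • u x := by
  induction n with
  | zero => simp
  | succ n ih => rw [pow_succ' (2 : ℕ), mul_smul, hu, ih, smul_smul, ← pow_succ']

noncomputable def evenPart (f : X → Y) (x : X) : Y := (2 : ℝ)⁻¹ • (f x + f (-x))

noncomputable def oddPart (f : X → Y) (x : X) : Y := (2 : ℝ)⁻¹ • (f x - f (-x))

lemma evenPart_add_oddPart (f : X → Y) (x : X) : evenPart f x + oddPart f x = f x := by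
  simp only [evenPart, oddPart]; module

lemma evenPart_even (f : X → Y) : Function.Even (evenPart f) := fun x => by
  simp only [evenPart, neg_neg, add_comm]

lemma oddPart_odd (f : X → Y) : Function.Odd (oddPart f) := fun x => by
  simp only [oddPart, neg_neg]; module

lemma Dop_evenPart (f : X → Y) (x y : X) :
    Dop (evenPart f) x y = (2 : ℝ)⁻¹ • (Dop f x y + Dop f (-x) (-y)) := by
  change Dop (fun z => (2 : ℝ)⁻¹ • (f z + f (negAddMonoidHom z))) x y = _
  rw [Dop_smul, Dop_add, Dop_comp]; rfl

lemma Dop_oddPart (f : X → Y) (x y : X) :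
    Dop (oddPart f) x y = (2 : ℝ)⁻¹ • (Dop f x y - Dop f (-x) (-y)) := by
  change Dop (fun z => (2 : ℝ)⁻¹ • (f z - f (negAddMonoidHom z))) x y = _
  rw [Dop_smul, Dop_sub, Dop_comp]; rfl

end Identities

lemma Real.zero_rpow_le_rpow {x : ℝ} (hx : 0 ≤ x) (p : ℝ) : (0 : ℝ) ^ p ≤ x ^ p := by
  rcases eq_or_ne p 0 with rfl | hp
  · simp
  · rw [Real.zero_rpow hp]; exact Real.rpow_nonneg hx p

lemma Real.two_rpow_lt_two_pow {p : ℝ} {n : ℕ} (hp : p < n) : (2 : ℝ) ^ p < 2 ^ n := by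
  rw [← Real.rpow_natCast]; exact Real.rpow_lt_rpow_of_exponent_lt one_lt_two hp

section Approximate

variable {X Y : Type*} [NormedAddCommGroup X] [NormedAddCommGroup Y] [NormedSpace ℝ Y]

def ApproxMixedEq (p θ : ℝ) (φ : X → Y) : Prop :=
  ∀ x y : X, ‖Dop φ x y‖ ≤ θ * (‖x‖ ^ p + ‖y‖ ^ p)

lemma approxMixedEq_evenPart {p θ : ℝ} {f : X → Y} (hf : ApproxMixedEq p θ f) :
    ApproxMixedEq p θ (evenPart f) := fun x y => by
  have h₁ := hf x y
  have h₂ := hf (-x) (-y)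
  rw [norm_neg, norm_neg] at h₂
  rw [Dop_evenPart, norm_smul, norm_inv, Real.norm_two]
  linarith [norm_add_le (Dop f x y) (Dop f (-x) (-y))]

lemma approxMixedEq_oddPart {p θ : ℝ} {f : X → Y} (hf : ApproxMixedEq p θ f) :
    ApproxMixedEq p θ (oddPart f) := fun x y => by
  have h₁ := hf x y
  have h₂ := hf (-x) (-y)
  rw [norm_neg, norm_neg] at h₂
  rw [Dop_oddPart, norm_smul, norm_inv, Real.norm_two]
  linarith [norm_sub_le (Dop f x y) (Dop f (-x) (-y))]

lemma norm_map_two_nsmul_sub_le_of_odd {p θ : ℝ} {φ : X → Y} (hθ : 0 ≤ θ)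
    (ho : Function.Odd φ) (hφ : ApproxMixedEq p θ φ) (x : X) :
    ‖φ (2 • x) - (8 : ℝ) • φ x‖ ≤ 5 / 3 * θ * ‖x‖ ^ p := by
  have h0 : φ 0 = 0 := by
    have e := ho 0
    rw [neg_zero] at e
    linear_combination (norm := module) (1 / 2 : ℝ) • e
  have h₁ := hφ x x
  have h₂ := hφ 0 x
  have hzero := mul_le_mul_of_nonneg_left (Real.zero_rpow_le_rpow (norm_nonneg x) p) hθ
  rw [norm_zero] at h₂
  have h₃ := congrArg norm (Dop_self_sub_Dop_zero_of_odd ho h0 x)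
  have h₄ := norm_sub_le (4 • Dop φ x x) (Dop φ 0 x)
  rw [RCLike.norm_nsmul ℝ] at h₃ h₄
  rw [← Nat.cast_smul_eq_nsmul ℝ 8, Nat.cast_ofNat] at h₃
  simp only [nsmul_eq_mul, Nat.cast_ofNat] at h₃ h₄
  linarith

variable [NormedSpace ℝ X]

lemma rpow_norm_nsmul (p : ℝ) (m : ℕ) (x : X) : ‖m • x‖ ^ p = (m : ℝ) ^ p * ‖x‖ ^ p := by
  rw [RCLike.norm_nsmul ℝ, nsmul_eq_mul, Real.mul_rpow m.cast_nonneg (norm_nonneg x)]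

lemma rpow_norm_two_pow_nsmul (p : ℝ) (n : ℕ) (x : X) :
    ‖(2 ^ n) • x‖ ^ p = ((2 : ℝ) ^ p) ^ n * ‖x‖ ^ p := by
  rw [rpow_norm_nsmul, Nat.cast_pow, Nat.cast_ofNat, ← Real.rpow_pow_comm zero_le_two]

lemma approxMixedEq_smul_add_smul_two_nsmul {p θ : ℝ} {φ : X → Y} (hφ : ApproxMixedEq p θ φ)
    (a b : ℝ) :
    ApproxMixedEq p ((|a| + |b| * 2 ^ p) * θ) (fun x => a • φ x + b • φ (2 • x)) := by
  intro x y
  have h₁ := hφ x y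
  have h₂ := hφ (2 • x) (2 • y)
  rw [rpow_norm_nsmul, rpow_norm_nsmul, Nat.cast_ofNat] at h₂
  rw [Dop_add, Dop_smul, Dop_smul b (fun z => φ (2 • z)), Dop_comp_nsmul]
  refine (norm_add_le _ _).trans ?_
  rw [norm_smul, norm_smul, Real.norm_eq_abs, Real.norm_eq_abs]
  linarith [mul_le_mul_of_nonneg_left h₁ (abs_nonneg a),
    mul_le_mul_of_nonneg_left h₂ (abs_nonneg b)]

lemma norm_map_two_nsmul_two_nsmul_sub_le_of_even {p θ : ℝ} {φ : X → Y} (hθ : 0 ≤ θ)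
    (he : Function.Even φ) (h0 : φ 0 = 0) (hφ : ApproxMixedEq p θ φ) (x : X) :
    ‖φ (2 • 2 • x) - 20 • φ (2 • x) + 64 • φ x‖ ≤ (2 ^ p + 9) / 3 * θ * ‖x‖ ^ p := by
  have h₁ := hφ (2 • x) x
  have h₂ := hφ 0 x
  rw [rpow_norm_nsmul, Nat.cast_ofNat] at h₁
  have hzero := mul_le_mul_of_nonneg_left (Real.zero_rpow_le_rpow (norm_nonneg x) p) hθ
  rw [norm_zero] at h₂
  have h₃ := congrArg norm (Dop_two_nsmul_sub_Dop_zero_of_even he h0 x)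
  rw [RCLike.norm_nsmul ℝ] at h₃
  have h₄ := norm_sub_le (Dop φ (2 • x) x) (4 • Dop φ 0 x)
  rw [RCLike.norm_nsmul ℝ] at h₄
  simp only [nsmul_eq_mul, Nat.cast_ofNat] at h₃ h₄
  linarith

end Approximate

section Dilation

variable {X Y : Type*} [NormedAddCommGroup X] [NormedAddCommGroup Y] [NormedSpace ℝ Y]

lemma tendsto_inv_pow_smul_zero {p K C : ℝ} (hK : 2 ^ p < K) {v : ℕ → Y}
    (hv : ∀ n, ‖v n‖ ≤ C * ((2 : ℝ) ^ p) ^ n) :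
    Tendsto (fun n => (K ^ n)⁻¹ • v n) atTop (𝓝 0) := by
  have h2p : 0 < (2 : ℝ) ^ p := Real.rpow_pos_of_pos two_pos p
  have hK0 : 0 < K := h2p.trans hK
  refine squeeze_zero_norm (a := fun n => C * (2 ^ p / K) ^ n) (fun n => ?_) ?_
  · rw [norm_smul, norm_inv, norm_pow, Real.norm_of_nonneg hK0.le, div_pow, mul_div,
      inv_mul_eq_div]
    gcongr
    exact hv n
  · simpa using (tendsto_pow_atTop_nhds_zero_of_lt_one (by positivity)
      ((div_lt_one hK0).2 hK)).const_mul C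

lemma tendsto_inv_pow_smul_map_two_pow_nsmul {v : X → Y} {L K : ℝ} (hL : 0 ≤ L) (hLK : L < K)
    (hv : ∀ x, v (2 • x) = L • v x) (x : X) :
    Tendsto (fun n : ℕ => (K ^ n)⁻¹ • v (2 ^ n • x)) atTop (𝓝 0) := by
  have hK : 0 < K := hL.trans_lt hLK
  have := (tendsto_pow_atTop_nhds_zero_of_lt_one (div_nonneg hL hK.le)
    ((div_lt_one hK).2 hLK)).smul_const (v x)
  rw [zero_smul] at this
  refine this.congr fun n => ?_
  rw [map_two_pow_nsmul hv, smul_smul, div_pow, div_eq_inv_mul]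

noncomputable def dilationLimit (K : ℝ) (φ : X → Y) (x : X) : Y :=
  limUnder atTop fun n : ℕ => (K ^ n)⁻¹ • φ (2 ^ n • x)

lemma dilationLimit_even {K : ℝ} {φ : X → Y} (he : Function.Even φ) :
    Function.Even (dilationLimit K φ) := fun x => by simp only [dilationLimit, smul_neg, he _]

variable [NormedSpace ℝ X] {p K c : ℝ} {φ : X → Y}

lemma dist_inv_pow_smul_succ_le (hK : 2 ^ p < K)
    (hφ : ∀ x, ‖φ (2 • x) - K • φ x‖ ≤ c * ‖x‖ ^ p) (x : X) (n : ℕ) :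
    dist ((K ^ n)⁻¹ • φ (2 ^ n • x)) ((K ^ (n + 1))⁻¹ • φ (2 ^ (n + 1) • x)) ≤
      c * ‖x‖ ^ p / K * (2 ^ p / K) ^ n := by
  have hK0 : 0 < K := (Real.rpow_pos_of_pos two_pos p).trans hK
  have hpow : (K ^ (n + 1))⁻¹ * K = (K ^ n)⁻¹ := by rw [pow_succ]; field_simp
  have e : (K ^ n)⁻¹ • φ (2 ^ n • x) - (K ^ (n + 1))⁻¹ • φ (2 ^ (n + 1) • x) =
      -(K ^ (n + 1))⁻¹ • (φ (2 • 2 ^ n • x) - K • φ (2 ^ n • x)) := by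
    rw [pow_succ' (2 : ℕ), mul_smul, neg_smul, smul_sub, smul_smul _ K, hpow]
    abel
  rw [dist_eq_norm, e, norm_smul, norm_neg, norm_inv, norm_pow, Real.norm_of_nonneg hK0.le]
  calc (K ^ (n + 1))⁻¹ * ‖φ (2 • 2 ^ n • x) - K • φ (2 ^ n • x)‖
      ≤ (K ^ (n + 1))⁻¹ * (c * (((2 : ℝ) ^ p) ^ n * ‖x‖ ^ p)) := by
        rw [← rpow_norm_two_pow_nsmul]; gcongr; exact hφ _
    _ = c * ‖x‖ ^ p / K * (2 ^ p / K) ^ n := by rw [div_pow, pow_succ]; field_simp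

variable [CompleteSpace Y]

lemma tendsto_dilationLimit (hK : 2 ^ p < K)
    (hφ : ∀ x, ‖φ (2 • x) - K • φ x‖ ≤ c * ‖x‖ ^ p) (x : X) :
    Tendsto (fun n : ℕ => (K ^ n)⁻¹ • φ (2 ^ n • x)) atTop (𝓝 (dilationLimit K φ x)) :=
  (cauchySeq_of_le_geometric _ _ ((div_lt_one ((Real.rpow_pos_of_pos two_pos p).trans hK)).2 hK)
    (dist_inv_pow_smul_succ_le hK hφ x)).tendsto_limUnder

lemma norm_sub_dilationLimit_le (hK : 2 ^ p < K)
    (hφ : ∀ x, ‖φ (2 • x) - K • φ x‖ ≤ c * ‖x‖ ^ p) (x : X) :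
    ‖φ x - dilationLimit K φ x‖ ≤ c / (K - 2 ^ p) * ‖x‖ ^ p := by
  have hK0 : 0 < K := (Real.rpow_pos_of_pos two_pos p).trans hK
  have h := dist_le_of_le_geometric_of_tendsto₀ _ _ ((div_lt_one hK0).2 hK)
    (dist_inv_pow_smul_succ_le hK hφ x) (tendsto_dilationLimit hK hφ x)
  rw [pow_zero, pow_zero, inv_one, one_smul, one_smul, dist_eq_norm] at h
  convert h using 1
  field_simp [(sub_pos.2 hK).ne']

lemma dilationLimit_two_nsmul (hK : 2 ^ p < K)
    (hφ : ∀ x, ‖φ (2 • x) - K • φ x‖ ≤ c * ‖x‖ ^ p) (x : X) :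
    dilationLimit K φ (2 • x) = K • dilationLimit K φ x := by
  have hK0 : K ≠ 0 := ((Real.rpow_pos_of_pos two_pos p).trans hK).ne'
  refine tendsto_nhds_unique (tendsto_dilationLimit hK hφ (2 • x)) ?_
  convert ((tendsto_dilationLimit hK hφ x).comp (tendsto_add_atTop_nat 1)).const_smul K
    using 2 with n
  simp only [Function.comp_apply, smul_smul, pow_succ]
  congr 1
  field_simp

lemma dilationLimit_odd (hK : 2 ^ p < K) (hφ : ∀ x, ‖φ (2 • x) - K • φ x‖ ≤ c * ‖x‖ ^ p)
    (ho : Function.Odd φ) : Function.Odd (dilationLimit K φ) := fun x =>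
  tendsto_nhds_unique (tendsto_dilationLimit hK hφ (-x))
    (by simpa only [smul_neg, ho _] using (tendsto_dilationLimit hK hφ x).neg)

lemma Dop_dilationLimit_eq_zero {θ : ℝ} (hK : 2 ^ p < K)
    (hφ : ∀ x, ‖φ (2 • x) - K • φ x‖ ≤ c * ‖x‖ ^ p) (hD : ApproxMixedEq p θ φ) (x y : X) :
    Dop (dilationLimit K φ) x y = 0 := by
  have hcont : Continuous fun g : X → Y => Dop g x y := by unfold Dop; fun_prop
  refine tendsto_nhds_unique ((hcont.tendsto _).comp
    (tendsto_pi_nhds.2 (tendsto_dilationLimit hK hφ))) ?_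
  have hbound (n : ℕ) : ‖Dop φ (2 ^ n • x) (2 ^ n • y)‖ ≤
      θ * (‖x‖ ^ p + ‖y‖ ^ p) * ((2 : ℝ) ^ p) ^ n := by
    have := hD (2 ^ n • x) (2 ^ n • y)
    rw [rpow_norm_two_pow_nsmul, rpow_norm_two_pow_nsmul] at this
    linarith
  refine (tendsto_inv_pow_smul_zero hK hbound).congr fun n => ?_
  simp only [Function.comp_apply, Dop_smul, Dop_comp_nsmul]

end Dilation

section Stability

variable {X Y : Type*} [NormedAddCommGroup X] [NormedSpace ℝ X]
  [NormedAddCommGroup Y] [NormedSpace ℝ Y] [CompleteSpace Y] {p θ c : ℝ} {φ : X → Y}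

theorem exists_isQuadratic_norm_sub_le (hp : p < 2) (he : Function.Even φ)
    (hD : ApproxMixedEq p θ φ) (hφ : ∀ x, ‖φ (2 • x) - (4 : ℝ) • φ x‖ ≤ c * ‖x‖ ^ p) :
    ∃ Q, IsQuadratic Q ∧ ∀ x, ‖φ x - Q x‖ ≤ c / (4 - 2 ^ p) * ‖x‖ ^ p := by
  have hK : (2 : ℝ) ^ p < 4 :=
    (Real.two_rpow_lt_two_pow (n := 2) (by exact_mod_cast hp)).trans_eq (by norm_num)
  exact ⟨dilationLimit 4 φ, isQuadratic_of_Dop_eq_zero (Dop_dilationLimit_eq_zero hK hφ hD)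
    (dilationLimit_even he) (dilationLimit_two_nsmul hK hφ), norm_sub_dilationLimit_le hK hφ⟩

theorem exists_isCubic_norm_sub_le (hp : p < 3) (ho : Function.Odd φ)
    (hD : ApproxMixedEq p θ φ) (hφ : ∀ x, ‖φ (2 • x) - (8 : ℝ) • φ x‖ ≤ c * ‖x‖ ^ p) :
    ∃ C, IsCubic C ∧ ∀ x, ‖φ x - C x‖ ≤ c / (8 - 2 ^ p) * ‖x‖ ^ p := by
  have hK : (2 : ℝ) ^ p < 8 :=
    (Real.two_rpow_lt_two_pow (n := 3) (by exact_mod_cast hp)).trans_eq (by norm_num)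
  exact ⟨dilationLimit 8 φ, isCubic_of_Dop_eq_zero (Dop_dilationLimit_eq_zero hK hφ hD)
    (dilationLimit_odd hK hφ ho) (dilationLimit_two_nsmul hK hφ), norm_sub_dilationLimit_le hK hφ⟩

theorem exists_isQuartic_norm_sub_le (hp : p < 4) (he : Function.Even φ)
    (hD : ApproxMixedEq p θ φ) (hφ : ∀ x, ‖φ (2 • x) - (16 : ℝ) • φ x‖ ≤ c * ‖x‖ ^ p) :
    ∃ Q, IsQuartic Q ∧ ∀ x, ‖φ x - Q x‖ ≤ c / (16 - 2 ^ p) * ‖x‖ ^ p := by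
  have hK : (2 : ℝ) ^ p < 16 :=
    (Real.two_rpow_lt_two_pow (n := 4) (by exact_mod_cast hp)).trans_eq (by norm_num)
  exact ⟨dilationLimit 16 φ, isQuartic_of_Dop_eq_zero (Dop_dilationLimit_eq_zero hK hφ hD)
    (dilationLimit_even he) (dilationLimit_two_nsmul hK hφ), norm_sub_dilationLimit_le hK hφ⟩

theorem exists_isQuadratic_isQuartic_of_even (hθ : 0 ≤ θ) (hp : p < 2) (he : Function.Even φ)
    (h0 : φ 0 = 0) (hD : ApproxMixedEq p θ φ) :
    ∃ Q₁ Q₂, IsQuadratic Q₁ ∧ IsQuartic Q₂ ∧ ∀ x, ‖φ x - Q₁ x - Q₂ x‖ ≤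
      (2 ^ p + 9) / 36 * θ * (1 / (4 - 2 ^ p) + 1 / (16 - 2 ^ p)) * ‖x‖ ^ p := by
  -- `g = (16 φ - φ(2·)) / 12` and `h = (φ(2·) - 4 φ) / 12` are the components of `φ` for the
  -- factors `t - 4` and `t - 16` of `t² - 20t + 64`.
  set g : X → Y := fun x => (4 / 3 : ℝ) • φ x + (-1 / 12 : ℝ) • φ (2 • x)
  set h : X → Y := fun x => (-1 / 3 : ℝ) • φ x + (1 / 12 : ℝ) • φ (2 • x)
  have hE := norm_map_two_nsmul_two_nsmul_sub_le_of_even hθ he h0 hD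
  have hg (x : X) : ‖g (2 • x) - (4 : ℝ) • g x‖ ≤ (2 ^ p + 9) / 36 * θ * ‖x‖ ^ p := by
    have e : g (2 • x) - (4 : ℝ) • g x =
        (-1 / 12 : ℝ) • (φ (2 • 2 • x) - 20 • φ (2 • x) + 64 • φ x) := by simp only [g]; module
    rw [e, norm_smul]
    norm_num
    linarith [hE x]
  have hh (x : X) : ‖h (2 • x) - (16 : ℝ) • h x‖ ≤ (2 ^ p + 9) / 36 * θ * ‖x‖ ^ p := by
    have e : h (2 • x) - (16 : ℝ) • h x =
        (1 / 12 : ℝ) • (φ (2 • 2 • x) - 20 • φ (2 • x) + 64 • φ x) := by simp only [h]; module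
    rw [e, norm_smul]
    norm_num
    linarith [hE x]
  have hge : Function.Even g := fun x => by simp only [g, smul_neg, he _]
  have hhe : Function.Even h := fun x => by simp only [h, smul_neg, he _]
  obtain ⟨Q₁, hQ₁, h₁⟩ := exists_isQuadratic_norm_sub_le hp hge
    (approxMixedEq_smul_add_smul_two_nsmul hD _ _) hg
  obtain ⟨Q₂, hQ₂, h₂⟩ := exists_isQuartic_norm_sub_le (by linarith) hhe
    (approxMixedEq_smul_add_smul_two_nsmul hD _ _) hh
  refine ⟨Q₁, Q₂, hQ₁, hQ₂, fun x => ?_⟩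
  have e : φ x - Q₁ x - Q₂ x = (g x - Q₁ x) + (h x - Q₂ x) := by simp only [g, h]; module
  rw [e]
  exact (norm_add_le _ _).trans ((add_le_add (h₁ x) (h₂ x)).trans_eq (by ring))

end Stability

section Uniqueness

variable {X Y : Type*} [NormedAddCommGroup X] [NormedSpace ℝ X]
  [NormedAddCommGroup Y] [NormedSpace ℝ Y] {p : ℝ}

lemma eq_zero_of_norm_add_le {u v : X → Y} {K M : ℝ} (hK : 2 ^ p < K)
    (hu : ∀ x, u (2 • x) = K • u x)
    (hv : ∀ x, Tendsto (fun n : ℕ => (K ^ n)⁻¹ • v (2 ^ n • x)) atTop (𝓝 0))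
    (hb : ∀ x, ‖u x + v x‖ ≤ M * ‖x‖ ^ p) : u = 0 := by
  funext x
  show u x = 0
  have hK0 : K ≠ 0 := ((Real.rpow_pos_of_pos two_pos p).trans hK).ne'
  have hlim : Tendsto (fun n : ℕ => (K ^ n)⁻¹ • (u (2 ^ n • x) + v (2 ^ n • x))) atTop
      (𝓝 (u x)) := by
    simpa only [smul_add, map_two_pow_nsmul hu, smul_smul, inv_mul_cancel₀ (pow_ne_zero _ hK0),
      one_smul, add_zero] using (hv x).const_add (u x)
  exact tendsto_nhds_unique hlim (tendsto_inv_pow_smul_zero hK (C := M * ‖x‖ ^ p) fun n =>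
    (hb _).trans_eq (by rw [rpow_norm_two_pow_nsmul]; ring))

theorem eq_zero_of_norm_add_add_le {Q c q : X → Y} {M : ℝ} (hp : p < 2) (hQ : IsQuadratic Q)
    (hc : IsCubic c) (hq : IsQuartic q) (hb : ∀ x, ‖Q x + c x + q x‖ ≤ M * ‖x‖ ^ p) :
    Q = 0 ∧ c = 0 ∧ q = 0 := by
  have h4 : (2 : ℝ) ^ p < 4 :=
    (Real.two_rpow_lt_two_pow (n := 2) (by exact_mod_cast hp)).trans_eq (by norm_num)
  have hq0 : q = 0 := eq_zero_of_norm_add_le (v := fun x => Q x + c x) (by linarith)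
    hq.map_two_nsmul
    (fun x => by
      simpa only [smul_add, add_zero] using
        (tendsto_inv_pow_smul_map_two_pow_nsmul (K := 16) (by norm_num) (by norm_num)
          hQ.map_two_nsmul x).add
        (tendsto_inv_pow_smul_map_two_pow_nsmul (by norm_num) (by norm_num) hc.map_two_nsmul x))
    (fun x => by rw [add_comm]; exact hb x)
  have hc0 : c = 0 := eq_zero_of_norm_add_le (by linarith) hc.map_two_nsmul
    (tendsto_inv_pow_smul_map_two_pow_nsmul (K := 8) (by norm_num) (by norm_num)
      hQ.map_two_nsmul)
    (fun x => by simpa only [hq0, Pi.zero_apply, add_zero, add_comm] using hb x)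
  have hQ0 : Q = 0 := eq_zero_of_norm_add_le (v := 0) h4 hQ.map_two_nsmul
    (fun x => by simp)
    (fun x => by simpa only [hq0, hc0, Pi.zero_apply, add_zero] using hb x)
  exact ⟨hQ0, hc0, hq0⟩

theorem eq_of_norm_sub_sub_sub_le {f Q₁ C Q₂ Q₁' C' Q₂' : X → Y} {M : ℝ} (hp : p < 2)
    (hQ₁ : IsQuadratic Q₁) (hC : IsCubic C) (hQ₂ : IsQuartic Q₂)
    (hQ₁' : IsQuadratic Q₁') (hC' : IsCubic C') (hQ₂' : IsQuartic Q₂')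
    (h : ∀ x, ‖f x - Q₁ x - C x - Q₂ x‖ ≤ M * ‖x‖ ^ p)
    (h' : ∀ x, ‖f x - Q₁' x - C' x - Q₂' x‖ ≤ M * ‖x‖ ^ p) :
    Q₁' = Q₁ ∧ C' = C ∧ Q₂' = Q₂ := by
  obtain ⟨e₁, e₂, e₃⟩ := eq_zero_of_norm_add_add_le (M := 2 * M) hp (hQ₁'.sub hQ₁) (hC'.sub hC)
    (hQ₂'.sub hQ₂) fun x => by
      have e : (Q₁' - Q₁) x + (C' - C) x + (Q₂' - Q₂) x =
          (f x - Q₁ x - C x - Q₂ x) - (f x - Q₁' x - C' x - Q₂' x) := by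
        simp only [Pi.sub_apply]; abel
      rw [e]
      linarith [norm_sub_le (f x - Q₁ x - C x - Q₂ x) (f x - Q₁' x - C' x - Q₂' x), h x, h' x]
  exact ⟨sub_eq_zero.1 e₁, sub_eq_zero.1 e₂, sub_eq_zero.1 e₃⟩

end Uniqueness

/-- Since `‖0‖ ^ 0 = 1`, the odd part only gets the constant `5 / 3` (not `3 / 2`); the slack in
the even part absorbs the difference. -/
lemma mixed_constant_le {A : ℝ} (hA0 : 0 < A) (hA4 : A < 4) :
    (A + 9) / 36 * (1 / (4 - A) + 1 / (16 - A)) + 5 / 3 / (8 - A) ≤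
      (33 + A) / 9 * (1 / (4 - A) + 4 / (16 - A)) + 3 / (2 * (8 - A)) := by
  have hu : 1 / 4 ≤ 1 / (4 - A) := one_div_le_one_div_of_le (by linarith) (by linarith)
  have hv : 0 ≤ 1 / (16 - A) := one_div_nonneg.2 (by linarith)
  have hw : 1 / (8 - A) ≤ 1 / 4 := one_div_le_one_div_of_le (by norm_num) (by linarith)
  have e₁ : 5 / 3 / (8 - A) = 5 / 3 * (1 / (8 - A)) := by ring
  have e₂ : 4 / (16 - A) = 4 * (1 / (16 - A)) := by ring
  have e₃ : 3 / (2 * (8 - A)) = 3 / 2 * (1 / (8 - A)) := by field_simp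
  rw [e₁, e₂, e₃]
  nlinarith

theorem stmt_17_general {X Y : Type*} [NormedAddCommGroup X] [NormedSpace ℝ X]
    [NormedAddCommGroup Y] [NormedSpace ℝ Y] [CompleteSpace Y]
    (p θ : ℝ) (hp : p < 2) (hθ : 0 ≤ θ)
    (f : X → Y) (hf0 : f 0 = 0)
    (hbd : ∀ x y : X, ‖Dop f x y‖ ≤ θ * (‖x‖ ^ p + ‖y‖ ^ p)) :
    ∃ (Q₁ C Q₂ : X → Y),
      IsQuadratic Q₁ ∧ IsCubic C ∧ IsQuartic Q₂ ∧
      (∀ x : X, ‖f x - Q₁ x - C x - Q₂ x‖ ≤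
        ((33 + (2 : ℝ) ^ p) / 9 * (1 / (4 - (2 : ℝ) ^ p) + 4 / (16 - (2 : ℝ) ^ p)) +
          3 / (2 * (8 - (2 : ℝ) ^ p))) * θ * ‖x‖ ^ p) ∧
      (∀ Q₁' C' Q₂' : X → Y, IsQuadratic Q₁' → IsCubic C' → IsQuartic Q₂' →
        (∀ x : X, ‖f x - Q₁' x - C' x - Q₂' x‖ ≤
          ((33 + (2 : ℝ) ^ p) / 9 * (1 / (4 - (2 : ℝ) ^ p) + 4 / (16 - (2 : ℝ) ^ p)) +
            3 / (2 * (8 - (2 : ℝ) ^ p))) * θ * ‖x‖ ^ p) →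
        Q₁' = Q₁ ∧ C' = C ∧ Q₂' = Q₂) := by
  have h4 : (2 : ℝ) ^ p < 4 :=
    (Real.two_rpow_lt_two_pow (n := 2) (by exact_mod_cast hp)).trans_eq (by norm_num)
  obtain ⟨Q₁, Q₂, hQ₁, hQ₂, heven⟩ := exists_isQuadratic_isQuartic_of_even hθ hp
    (evenPart_even f) (by simp [evenPart, hf0]) (approxMixedEq_evenPart hbd)
  obtain ⟨C, hC, hodd⟩ := exists_isCubic_norm_sub_le (by linarith) (oddPart_odd f)
    (approxMixedEq_oddPart hbd) (norm_map_two_nsmul_sub_le_of_odd hθ (oddPart_odd f)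
      (approxMixedEq_oddPart hbd))
  have hbound (x : X) : ‖f x - Q₁ x - C x - Q₂ x‖ ≤
      ((33 + (2 : ℝ) ^ p) / 9 * (1 / (4 - (2 : ℝ) ^ p) + 4 / (16 - (2 : ℝ) ^ p)) +
        3 / (2 * (8 - (2 : ℝ) ^ p))) * θ * ‖x‖ ^ p := calc
    ‖f x - Q₁ x - C x - Q₂ x‖
        = ‖(evenPart f x - Q₁ x - Q₂ x) + (oddPart f x - C x)‖ := by
      rw [← evenPart_add_oddPart f x]; abel_nf
    _ ≤ ((2 ^ p + 9) / 36 * (1 / (4 - 2 ^ p) + 1 / (16 - 2 ^ p)) + 5 / 3 / (8 - 2 ^ p)) *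
          θ * ‖x‖ ^ p :=
      (norm_add_le _ _).trans ((add_le_add (heven x) (hodd x)).trans_eq (by ring))
    _ ≤ _ := by
      gcongr ?_ * _ * _
      exact mixed_constant_le (Real.rpow_pos_of_pos two_pos p) h4
  exact ⟨Q₁, C, Q₂, hQ₁, hC, hQ₂, hbound, fun Q₁' C' Q₂' hQ₁' hC' hQ₂' hbound' =>
    eq_of_norm_sub_sub_sub_le hp hQ₁ hC hQ₂ hQ₁' hC' hQ₂' hbound hbound'⟩

theorem stmt_17 {X Y : Type*} [NormedAddCommGroup X] [NormedSpace ℝ X]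
    [NormedAddCommGroup Y] [NormedSpace ℝ Y] [CompleteSpace Y]
    (p θ : ℝ) (hp0 : 0 ≤ p) (hp : p < 2) (hθ : 0 ≤ θ)
    (f : X → Y) (hf0 : f 0 = 0)
    (hbd : ∀ x y : X, ‖Dop f x y‖ ≤ θ * (‖x‖ ^ p + ‖y‖ ^ p)) :
    ∃ (Q₁ C Q₂ : X → Y),
      IsQuadratic Q₁ ∧ IsCubic C ∧ IsQuartic Q₂ ∧
      (∀ x : X, ‖f x - Q₁ x - C x - Q₂ x‖ ≤
        ((33 + (2 : ℝ) ^ p) / 9 * (1 / (4 - (2 : ℝ) ^ p) + 4 / (16 - (2 : ℝ) ^ p)) +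
          3 / (2 * (8 - (2 : ℝ) ^ p))) * θ * ‖x‖ ^ p) ∧
      (∀ Q₁' C' Q₂' : X → Y, IsQuadratic Q₁' → IsCubic C' → IsQuartic Q₂' →
        (∀ x : X, ‖f x - Q₁' x - C' x - Q₂' x‖ ≤
          ((33 + (2 : ℝ) ^ p) / 9 * (1 / (4 - (2 : ℝ) ^ p) + 4 / (16 - (2 : ℝ) ^ p)) +
            3 / (2 * (8 - (2 : ℝ) ^ p))) * θ * ‖x‖ ^ p) →
        Q₁' = Q₁ ∧ C' = C ∧ Q₂' = Q₂) :=
  stmt_17_general p θ hp hθ f hf0 hbd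
end

section
/- Let X and Y be real vector spaces. Suppose Q₁ : X × X → Y is symmetric and additive in each variable, C : X × X × X → Y is invariant under permutations of its arguments and additive in each variable, and Q₂ : X × X × X × X → Y is invariant under permutations of its arguments and additive in each variable. Then the function f : X → Y defined by f(x) = Q₁(x,x) + C(x,x,x) + Q₂(x,x,x,x) satisfies the mixed functional equation (1.5). -/
open Filter Topology

/-- A symmetric bi-additive map. -/
def SymBiAdd {X Y : Type*} [AddCommGroup X] [AddCommGroup Y] (B : X → X → Y) : Prop :=
  (∀ x y, B x y = B y x) ∧
  (∀ x x' y, B (x + x') y = B x y + B x' y) ∧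
  (∀ x y y', B x (y + y') = B x y + B x y')

/-- A symmetric tri-additive map (invariant under permutations, additive in each variable). -/
def SymTriAdd {X Y : Type*} [AddCommGroup X] [AddCommGroup Y] (C : X → X → X → Y) : Prop :=
  (∀ x y z, C x y z = C y x z) ∧
  (∀ x y z, C x y z = C x z y) ∧
  (∀ x x' y z, C (x + x') y z = C x y z + C x' y z) ∧
  (∀ x y y' z, C x (y + y') z = C x y z + C x y' z) ∧
  (∀ x y z z', C x y (z + z') = C x y z + C x y z')

/-- A symmetric quadri-additive map (invariant under permutations, additive in each variable). -/
def SymQuadAdd {X Y : Type*} [AddCommGroup X] [AddCommGroup Y] (Q : X → X → X → X → Y) : Prop :=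
  (∀ x y z w, Q x y z w = Q y x z w) ∧
  (∀ x y z w, Q x y z w = Q x z y w) ∧
  (∀ x y z w, Q x y z w = Q x y w z) ∧
  (∀ x x' y z w, Q (x + x') y z w = Q x y z w + Q x' y z w) ∧
  (∀ x y y' z w, Q x (y + y') z w = Q x y z w + Q x y' z w) ∧
  (∀ x y z z' w, Q x y (z + z') w = Q x y z w + Q x y z' w) ∧
  (∀ x y z w w', Q x y z (w + w') = Q x y z w + Q x y z w')

theorem stmt_19 {X Y : Type*} [AddCommGroup X] [Module ℝ X] [AddCommGroup Y] [Module ℝ Y]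
    (Q₁ : X → X → Y) (C : X → X → X → Y) (Q₂ : X → X → X → X → Y)
    (hQ₁ : SymBiAdd Q₁) (hC : SymTriAdd C) (hQ₂ : SymQuadAdd Q₂) :
    MixedEq (fun x : X => Q₁ x x + C x x x + Q₂ x x x x) := by
  obtain ⟨bs, ba1, ba2⟩ := hQ₁
  obtain ⟨cs1, cs2, ca1, ca2, ca3⟩ := hC
  obtain ⟨qs1, qs2, qs3, qa1, qa2, qa3, qa4⟩ := hQ₂
  -- zero lemmas
  have bz2 : ∀ x, Q₁ x 0 = 0 := by
    intro x; have h := ba2 x 0 0; rw [add_zero] at h; exact left_eq_add.mp h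
  have cz3 : ∀ x y, C x y 0 = 0 := by
    intro x y; have h := ca3 x y 0 0; rw [add_zero] at h; exact left_eq_add.mp h
  have qz4 : ∀ x y z, Q₂ x y z 0 = 0 := by
    intro x y z; have h := qa4 x y z 0 0; rw [add_zero] at h; exact left_eq_add.mp h
  -- neg lemmas
  have bn2 : ∀ x y, Q₁ x (-y) = -Q₁ x y := by
    intro x y
    have h := ba2 x y (-y); rw [add_neg_cancel, bz2] at h
    exact (neg_eq_of_add_eq_zero_right h.symm).symm
  have bn1 : ∀ x y, Q₁ (-x) y = -Q₁ x y := by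
    intro x y; rw [bs, bn2, bs]
  have cn3 : ∀ x y z, C x y (-z) = -C x y z := by
    intro x y z
    have h := ca3 x y z (-z); rw [add_neg_cancel, cz3] at h
    exact (neg_eq_of_add_eq_zero_right h.symm).symm
  have cn2 : ∀ x y z, C x (-y) z = -C x y z := by
    intro x y z; rw [cs2, cn3, cs2]
  have cn1 : ∀ x y z, C (-x) y z = -C x y z := by
    intro x y z; rw [cs1, cn2, cs1]
  have qn4 : ∀ x y z w, Q₂ x y z (-w) = -Q₂ x y z w := by
    intro x y z w
    have h := qa4 x y z w (-w); rw [add_neg_cancel, qz4] at h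
    exact (neg_eq_of_add_eq_zero_right h.symm).symm
  have qn3 : ∀ x y z w, Q₂ x y (-z) w = -Q₂ x y z w := by
    intro x y z w; rw [qs3, qn4, qs3]
  have qn2 : ∀ x y z w, Q₂ x (-y) z w = -Q₂ x y z w := by
    intro x y z w; rw [qs2, qn3, qs2]
  have qn1 : ∀ x y z w, Q₂ (-x) y z w = -Q₂ x y z w := by
    intro x y z w; rw [qs1, qn2, qs1]
  intro x y
  have h2 : ∀ a : X, (2:ℕ) • a = a + a := fun a => two_nsmul a
  have h3 : ∀ a : X, (3:ℕ) • a = a + a + a := by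
    intro a; rw [show (3:ℕ) = 2 + 1 from rfl, add_nsmul, two_nsmul, one_nsmul]
  simp only [h2, h3, sub_eq_add_neg, neg_add]
  simp only [ba1, ba2, ca1, ca2, ca3, qa1, qa2, qa3, qa4,
    bn1, bn2, cn1, cn2, cn3, qn1, qn2, qn3, qn4]
  simp only [smul_add, smul_neg]
  simp only [bs y x,
    cs1 y x x, cs1 y x y, cs2 x y x, cs2 y y x,
    qs1 y x x x, qs1 y x x y, qs1 y x y x, qs1 y x y y,
    qs2 x y x x, qs2 x y x y, qs2 y y x x, qs2 y y x y,
    qs3 x x y x, qs3 x y y x, qs3 y x y x, qs3 y y y x]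
  abel
end
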